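/- arXiv:2510.04433 — 6 statements merged into one kernel-verified Lean document; each statement's English description precedes it below -/
import Mathlib

section
/- Let {φ_i^j} (i=1,…,n, j=1,…,m_i) be a canonical system of eigenvectors and adjoined vectors of the pencil A+μB at μ=0 (so Aφ_i^1=0 and Aφ_i^j=−Bφ_i^{j−1}), and let {q_i^j} ⊂ Y* satisfy A*q_i^{m_i}=0, A*q_i^j=−B*q_i^{j+1}, with biorthogonality ⟨Bφ_i^j, q_k^l⟩ = δ_{ik}δ_{jl}. Define P₂x = Σ_{i,j} ⟨x, B*q_i^j⟩ φ_i^j and Q₂y = Σ_{i,j} ⟨y, q_i^j⟩ Bφ_i^j, P₁ = I_X − P₂, Q₁ = I_Y − Q₂. Then P₁, P₂ are mutually complementary bounded projectors on X, Q₁, Q₂ are mutually complementary bounded projectors on Y, and for all x ∈ D: A P_k x = Q_k A x and B P_k x = Q_k B x for k=1,2. -/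
/-!
Both projectors are "coordinate expansions" with respect to the biorthogonal system
`(B φ_i^j, q_i^j)`: `P₂ x` expands `B x` and `Q₂ y` expands `y`. Biorthogonality makes the
coefficients of an expansion reproduce themselves, which gives idempotence, and `B P₂ = Q₂ B` is
just linearity of `B`. For `A`, the chain relations turn `A` applied to a chain into `-B` applied
to the chain shifted down by one, while the adjoint relations shift the coefficients
`⟨A x, q_i^j⟩` up by one; the two shifts cancel term by term.
-/

section Biorthogonal

variable {R M N ι F : Type*} [CommSemiring R] [AddCommMonoid M] [Module R M]
  [AddCommMonoid N] [Module R N] [FunLike F N R] [LinearMapClass F R N R] [DecidableEq ι]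
  {s : Finset ι} {f : ι → F}

theorem apply_sum_smul_of_biorthogonal {e : ι → N}
    (hfe : ∀ i ∈ s, ∀ k ∈ s, f k (e i) = if i = k then 1 else 0) (c : ι → R) {k : ι}
    (hk : k ∈ s) : f k (∑ i ∈ s, c i • e i) = c k := by
  simp only [map_sum, map_smul, smul_eq_mul]
  rw [Finset.sum_congr rfl fun i hi => by rw [hfe i hi k hk]]
  simp [hk]

theorem sum_smul_idempotent_of_biorthogonal (g : M →ₗ[R] N) {φ : ι → M}
    (hfg : ∀ i ∈ s, ∀ k ∈ s, f k (g (φ i)) = if i = k then 1 else 0) (x : M) :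
    ∑ k ∈ s, f k (g (∑ i ∈ s, f i (g x) • φ i)) • φ k = ∑ i ∈ s, f i (g x) • φ i := by
  have hgx : g (∑ i ∈ s, f i (g x) • φ i) = ∑ i ∈ s, f i (g x) • g (φ i) := by
    simp only [map_sum, map_smul]
  rw [hgx]
  exact Finset.sum_congr rfl fun k hk => by rw [apply_sum_smul_of_biorthogonal hfg _ hk]

end Biorthogonal

/-- The coefficients `a j`, `b j` play the roles of `⟨B x, q^j⟩` and `⟨A x, q^j⟩`. -/
theorem map_sum_smul_of_chain {R M N : Type*} [Ring R] [AddCommGroup M] [Module R M]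
    [AddCommGroup N] [Module R N] (A B : M →ₗ[R] N) {φ : ℕ → M} {a b : ℕ → R} {m : ℕ}
    (heig : A (φ 0) = 0) (hchain : ∀ j, j + 1 < m → A (φ (j + 1)) = -B (φ j))
    (hlast : b (m - 1) = 0) (hshift : ∀ j, j + 1 < m → b j = -a (j + 1)) :
    A (∑ j ∈ Finset.range m, a j • φ j) = ∑ j ∈ Finset.range m, b j • B (φ j) := by
  cases m with
  | zero => simp
  | succ m =>
    rw [Nat.add_sub_cancel] at hlast
    rw [map_sum, Finset.sum_range_succ', Finset.sum_range_succ, map_smul, heig, hlast,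
      smul_zero, zero_smul, add_zero, add_zero]
    refine Finset.sum_congr rfl fun j hj => ?_
    have hj : j + 1 < m + 1 := Nat.succ_lt_succ (Finset.mem_range.mp hj)
    rw [map_smul, hchain j hj, hshift j hj, smul_neg, neg_smul]

theorem stmt_5_general
    {X Y : Type*} [NormedAddCommGroup X] [NormedSpace ℂ X]
    [NormedAddCommGroup Y] [NormedSpace ℂ Y]
    (A B : X →ₗ[ℂ] Y)
    (n : ℕ) (m : Fin n → ℕ)
    (φ : Fin n → ℕ → X) (q : Fin n → ℕ → (Y →L[ℂ] ℂ))
    -- chain relations: `A φ_i^1 = 0`, `A φ_i^j = -B φ_i^{j-1}`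
    (heig : ∀ i, A (φ i 0) = 0)
    (hchain : ∀ i j, j + 1 < m i → A (φ i (j + 1)) = - B (φ i j))
    -- adjoint chain relations: `A* q_i^{m_i} = 0`, `A* q_i^j = -B* q_i^{j+1}`
    (hqlast : ∀ i (x : X), q i (m i - 1) (A x) = 0)
    (hqchain : ∀ i j (x : X), j + 1 < m i → q i j (A x) = - q i (j + 1) (B x))
    -- biorthogonality `⟨B φ_i^j, q_k^l⟩ = δ_{ik} δ_{jl}`
    (hbiorth : ∀ i k j l, j < m i → l < m k →
        q k l (B (φ i j)) = if i = k ∧ j = l then 1 else 0)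
    -- the functionals `p_i^j = B* q_i^j` are bounded on `X`
    (p : Fin n → ℕ → (X →L[ℂ] ℂ))
    (hp : ∀ i j (x : X), p i j x = q i j (B x)) :
    ∃ (P₂ : X →L[ℂ] X) (Q₂ : Y →L[ℂ] Y),
      (∀ x, P₂ x = ∑ i : Fin n, ∑ j ∈ Finset.range (m i), q i j (B x) • φ i j) ∧
      (∀ y, Q₂ y = ∑ i : Fin n, ∑ j ∈ Finset.range (m i), q i j y • B (φ i j)) ∧
      -- `P₁, P₂` and `Q₁, Q₂` are mutually complementary projectors
      (∀ x, P₂ (P₂ x) = P₂ x) ∧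
      (∀ y, Q₂ (Q₂ y) = Q₂ y) ∧
      (∀ x, P₂ (x - P₂ x) = 0) ∧
      (∀ y, Q₂ (y - Q₂ y) = 0) ∧
      -- intertwining relations `A P_k x = Q_k A x`, `B P_k x = Q_k B x`, `k = 1, 2`
      (∀ x, A (P₂ x) = Q₂ (A x)) ∧
      (∀ x, B (P₂ x) = Q₂ (B x)) ∧
      (∀ x, A (x - P₂ x) = A x - Q₂ (A x)) ∧
      (∀ x, B (x - P₂ x) = B x - Q₂ (B x)) := by
  classical
  set s := (Finset.univ : Finset (Fin n)).sigma fun i => Finset.range (m i)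
  have hbi : ∀ a ∈ s, ∀ b ∈ s, q b.1 b.2 (B (φ a.1 a.2)) = if a = b then 1 else 0 := by
    rintro ⟨i, j⟩ hij ⟨k, l⟩ hkl
    simp only [s, Finset.mem_sigma, Finset.mem_univ, Finset.mem_range, true_and] at hij hkl
    simp [hbiorth i k j l hij hkl]
  let P₂ : X →L[ℂ] X := ∑ a ∈ s, (p a.1 a.2).smulRight (φ a.1 a.2)
  let Q₂ : Y →L[ℂ] Y := ∑ a ∈ s, (q a.1 a.2).smulRight (B (φ a.1 a.2))
  have hP (x : X) : P₂ x = ∑ a ∈ s, q a.1 a.2 (B x) • φ a.1 a.2 := by simp [P₂, hp]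
  have hQ (y : Y) : Q₂ y = ∑ a ∈ s, q a.1 a.2 y • B (φ a.1 a.2) := by simp [Q₂]
  have hP' (x : X) : P₂ x = ∑ i, ∑ j ∈ Finset.range (m i), q i j (B x) • φ i j :=
    (hP x).trans (Finset.sum_sigma _ _ _)
  have hQ' (y : Y) : Q₂ y = ∑ i, ∑ j ∈ Finset.range (m i), q i j y • B (φ i j) :=
    (hQ y).trans (Finset.sum_sigma _ _ _)
  have hPP (x : X) : P₂ (P₂ x) = P₂ x := by
    simp only [hP]
    exact sum_smul_idempotent_of_biorthogonal B hbi x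
  have hQQ (y : Y) : Q₂ (Q₂ y) = Q₂ y := by
    simp only [hQ]
    exact sum_smul_idempotent_of_biorthogonal LinearMap.id hbi y
  have hBP (x : X) : B (P₂ x) = Q₂ (B x) := by
    simp only [hP, hQ, map_sum, map_smul]
  have hAP (x : X) : A (P₂ x) = Q₂ (A x) := by
    rw [hP', hQ', map_sum]
    exact Finset.sum_congr rfl fun i _ =>
      map_sum_smul_of_chain A B (heig i) (hchain i) (hqlast i x) (hqchain i · x)
  refine ⟨P₂, Q₂, hP', hQ', hPP, hQQ, fun x => ?_, fun y => ?_, hAP, hBP, fun x => ?_,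
    fun x => ?_⟩
  · rw [map_sub, hPP, sub_self]
  · rw [map_sub, hQQ, sub_self]
  · rw [map_sub, hAP]
  · rw [map_sub, hBP]

/-- Given a canonical system `{φ i j}` (0-based index `j < m i`) of eigenvectors and adjoined
vectors of the pencil `A + μB` at `μ = 0`, and biorthogonal functionals `{q i j}` satisfying
the adjoint chain relations, the formulas `P₂x = Σ ⟨x, B*q i j⟩ • φ i j`,
`Q₂y = Σ ⟨y, q i j⟩ • B φ i j` define mutually complementary bounded projectors
(`P₁ = I - P₂`, `Q₁ = I - Q₂`) which intertwine `A` and `B`: `A P_k x = Q_k A x` and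
`B P_k x = Q_k B x` for `k = 1, 2`. -/
theorem stmt_5
    {X Y : Type*} [NormedAddCommGroup X] [NormedSpace ℂ X] [CompleteSpace X]
    [NormedAddCommGroup Y] [NormedSpace ℂ Y] [CompleteSpace Y]
    (A B : X →ₗ[ℂ] Y)
    (n : ℕ) (m : Fin n → ℕ) (hm : ∀ i, 0 < m i)
    (φ : Fin n → ℕ → X) (q : Fin n → ℕ → (Y →L[ℂ] ℂ))
    -- the vectors and functionals are indexed by `j < m i`; outside that range they vanish
    (hφ0 : ∀ i j, m i ≤ j → φ i j = 0)
    (hq0 : ∀ i j, m i ≤ j → q i j = 0)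
    -- chain relations: `A φ_i^1 = 0`, `A φ_i^j = -B φ_i^{j-1}`
    (heig : ∀ i, A (φ i 0) = 0)
    (hchain : ∀ i j, j + 1 < m i → A (φ i (j + 1)) = - B (φ i j))
    -- adjoint chain relations: `A* q_i^{m_i} = 0`, `A* q_i^j = -B* q_i^{j+1}`
    (hqlast : ∀ i (x : X), q i (m i - 1) (A x) = 0)
    (hqchain : ∀ i j (x : X), j + 1 < m i → q i j (A x) = - q i (j + 1) (B x))
    -- biorthogonality `⟨B φ_i^j, q_k^l⟩ = δ_{ik} δ_{jl}`
    (hbiorth : ∀ i k j l, j < m i → l < m k →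
        q k l (B (φ i j)) = if i = k ∧ j = l then 1 else 0)
    -- the functionals `p_i^j = B* q_i^j` are bounded on `X`
    (p : Fin n → ℕ → (X →L[ℂ] ℂ))
    (hp : ∀ i j (x : X), p i j x = q i j (B x)) :
    ∃ (P₂ : X →L[ℂ] X) (Q₂ : Y →L[ℂ] Y),
      (∀ x, P₂ x = ∑ i : Fin n, ∑ j ∈ Finset.range (m i), q i j (B x) • φ i j) ∧
      (∀ y, Q₂ y = ∑ i : Fin n, ∑ j ∈ Finset.range (m i), q i j y • B (φ i j)) ∧
      -- `P₁, P₂` and `Q₁, Q₂` are mutually complementary projectors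
      (∀ x, P₂ (P₂ x) = P₂ x) ∧
      (∀ y, Q₂ (Q₂ y) = Q₂ y) ∧
      (∀ x, P₂ (x - P₂ x) = 0) ∧
      (∀ y, Q₂ (y - Q₂ y) = 0) ∧
      -- intertwining relations `A P_k x = Q_k A x`, `B P_k x = Q_k B x`, `k = 1, 2`
      (∀ x, A (P₂ x) = Q₂ (A x)) ∧
      (∀ x, B (P₂ x) = Q₂ (B x)) ∧
      (∀ x, A (x - P₂ x) = A x - Q₂ (A x)) ∧
      (∀ x, B (x - P₂ x) = B x - Q₂ (B x)) :=
  stmt_5_general A B n m φ q heig hchain hqlast hqchain hbiorth p hp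
end

section
/- With the projectors of the canonical system, define Q_{2s}^{(j)} y = Σ_{i: m_i=j} ⟨y, q_i^{s+1}⟩ B φ_i^{s+1} and P_{2s}^{(j)} x = Σ_{i: m_i=j} ⟨x, B*q_i^{s+1}⟩ φ_i^{s+1}. Then these are pairwise disjoint projectors (P_{2s}^{(j)} P_{2s'}^{(j')} = δ_{ss'}δ_{jj'} P_{2s}^{(j)} and similarly for Q), and for all x in the domain: Q_{2s}^{(j)} B x = B P_{2s}^{(j)} x, A P_{20} x = 0, Q_{2s} A x = A P_{2(s+1)} x for s=0,…,ν−2, and Q_{2(ν−1)} A x = 0. -/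
/-!
Index the canonical system by pairs `a = (i, s)`. Biorthogonality says that `⟨B φ_b, q_a⟩ φ_a`
is `φ_a` if `a = b` and `0` otherwise (for `s ≥ m_i` because `φ_i^s = 0`), so the operator
`x ↦ Σ_{a ∈ S} ⟨B x, q_a⟩ φ_a` attached to a finite set `S` of indices composes like the
indicator of `S`. The projectors `P_{2s}^{(j)}`, `Q_{2s}^{(j)}` are those of the pairwise disjoint
sets `{i | m_i = j} × {s}`. The relations with `A` hold term by term along each chain:
`⟨A x, q^s⟩ B φ^s = ⟨B x, q^{s+1}⟩ A φ^{s+1}`, both factors changing sign by the chain relations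
when `s + 1 < m`, and both sides vanishing otherwise.
-/

open Finset

section BiorthogonalProjection

variable {R M κ : Type*} [Semiring R] [AddCommMonoid M] [Module R M]

def biorthProj (f : κ → M →ₗ[R] R) (v : κ → M) (S : Finset κ) (y : M) : M :=
  ∑ a ∈ S, f a y • v a

theorem biorthProj_biorthProj [DecidableEq κ] {f : κ → M →ₗ[R] R} {v : κ → M}
    (hfv : ∀ a b, f a (v b) • v a = if a = b then v a else 0) (S T : Finset κ) (y : M) :
    biorthProj f v S (biorthProj f v T y) = biorthProj f v (S ∩ T) y := by
  have hcoeff : ∀ a, f a (biorthProj f v T y) • v a = if a ∈ T then f a y • v a else 0 := by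
    intro a
    simp only [biorthProj, map_sum, map_smul, smul_eq_mul, sum_smul, mul_smul, hfv, smul_ite,
      smul_zero, sum_ite_eq]
  calc biorthProj f v S (biorthProj f v T y)
      = ∑ a ∈ S, if a ∈ T then f a y • v a else 0 := sum_congr rfl fun a _ => hcoeff a
    _ = biorthProj f v (S ∩ T) y := sum_ite_mem S T _

def levelSet {n : ℕ} (m : Fin n → ℕ) (s j : ℕ) : Finset (Fin n × ℕ) :=
  univ.filter (fun i => m i = j) ×ˢ {s}

theorem sum_ite_eq_sum_levelSet {n : ℕ} (m : Fin n → ℕ) (s j : ℕ) (g : Fin n × ℕ → M) :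
    (∑ i, if m i = j then g (i, s) else 0) = ∑ a ∈ levelSet m s j, g a := by
  rw [levelSet, sum_product, sum_filter]
  simp only [sum_singleton]

theorem levelSet_inter_levelSet {n : ℕ} (m : Fin n → ℕ) (s j s' j' : ℕ) :
    levelSet m s j ∩ levelSet m s' j' = if s = s' ∧ j = j' then levelSet m s j else ∅ := by
  split_ifs with h
  · rw [h.1, h.2, inter_self]
  · ext ⟨i, l⟩
    simp only [levelSet, mem_inter, mem_product, mem_filter, mem_univ, true_and,
      mem_singleton, notMem_empty, iff_false]
    omega

theorem biorthProj_levelSet_biorthProj_levelSet {n : ℕ} {m : Fin n → ℕ}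
    {f : Fin n × ℕ → M →ₗ[R] R} {v : Fin n × ℕ → M}
    (hfv : ∀ a b, f a (v b) • v a = if a = b then v a else 0) (s j s' j' : ℕ) (y : M) :
    biorthProj f v (levelSet m s j) (biorthProj f v (levelSet m s' j') y) =
      if s = s' ∧ j = j' then biorthProj f v (levelSet m s j) y else 0 := by
  rw [biorthProj_biorthProj hfv, levelSet_inter_levelSet]
  split_ifs <;> simp [biorthProj]

end BiorthogonalProjection

section CanonicalSystem

variable {R X Y : Type*} [Ring R] [TopologicalSpace R] [AddCommGroup X] [Module R X]
  [AddCommGroup Y] [Module R Y] [TopologicalSpace Y] (A B : X →ₗ[R] Y)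

theorem canonical_biorth_smul {n : ℕ} {m : Fin n → ℕ} {φ : Fin n → ℕ → X}
    {q : Fin n → ℕ → (Y →L[R] R)}
    (hφ0 : ∀ i j, m i ≤ j → φ i j = 0)
    (hbiorth : ∀ i k j l, j < m i → l < m k →
        q k l (B (φ i j)) = if i = k ∧ j = l then 1 else 0)
    {V : Type*} [AddCommMonoid V] [Module R V] (u : Fin n → ℕ → V)
    (hu : ∀ k l, m k ≤ l → u k l = 0) (a b : Fin n × ℕ) :
    q a.1 a.2 (B (φ b.1 b.2)) • u a.1 a.2 = if a = b then u a.1 a.2 else 0 := by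
  obtain ⟨k, l⟩ := a
  obtain ⟨i, j⟩ := b
  by_cases hl : l < m k
  · by_cases hj : j < m i
    · rw [hbiorth i k j l hj hl]
      by_cases h : i = k ∧ j = l
      · obtain ⟨rfl, rfl⟩ := h
        simp
      · rw [if_neg h, zero_smul, if_neg]
        simpa [Prod.ext_iff, eq_comm, and_comm] using h
    · rw [hφ0 i j (not_lt.1 hj), map_zero, map_zero, zero_smul, if_neg]
      simp only [Prod.ext_iff]
      rintro ⟨rfl, rfl⟩
      exact hj hl
  · rw [hu k l (not_lt.1 hl), smul_zero, ite_self]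

variable {m : ℕ} {φ : ℕ → X} {q : ℕ → Y →L[R] R}

theorem smul_shift_of_chain (hφ0 : ∀ j, m ≤ j → φ j = 0) (hq0 : ∀ j, m ≤ j → q j = 0)
    (hchain : ∀ j, j + 1 < m → A (φ (j + 1)) = - B (φ j))
    (hqlast : ∀ x, q (m - 1) (A x) = 0)
    (hqchain : ∀ j x, j + 1 < m → q j (A x) = - q (j + 1) (B x)) (s : ℕ) (x : X) :
    q s (A x) • B (φ s) = q (s + 1) (B x) • A (φ (s + 1)) := by
  rcases lt_trichotomy (s + 1) m with h | rfl | h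
  · rw [hqchain s x h, hchain s h, neg_smul, smul_neg]
  · rw [Nat.add_sub_cancel] at hqlast
    rw [hqlast, hφ0 _ le_rfl, map_zero, zero_smul, smul_zero]
  · rw [hq0 s (by omega), hφ0 (s + 1) h.le, map_zero, smul_zero, zero_apply, zero_smul]

theorem apply_A_eq_zero_of_le (hq0 : ∀ j, m ≤ j → q j = 0) (hqlast : ∀ x, q (m - 1) (A x) = 0)
    {ν : ℕ} (hmν : m ≤ ν) (x : X) : q (ν - 1) (A x) = 0 := by
  rcases hmν.eq_or_lt with rfl | h
  · exact hqlast x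
  · rw [hq0 (ν - 1) (by omega), zero_apply]

end CanonicalSystem

theorem stmt_6_general
    {X Y : Type*} [NormedAddCommGroup X] [NormedSpace ℂ X]
    [NormedAddCommGroup Y] [NormedSpace ℂ Y]
    (A B : X →ₗ[ℂ] Y)
    (n : ℕ) (m : Fin n → ℕ)
    (ν : ℕ) (hmν : ∀ i, m i ≤ ν)
    (φ : Fin n → ℕ → X) (q : Fin n → ℕ → (Y →L[ℂ] ℂ))
    (hφ0 : ∀ i j, m i ≤ j → φ i j = 0)
    (hq0 : ∀ i j, m i ≤ j → q i j = 0)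
    (heig : ∀ i, A (φ i 0) = 0)
    (hchain : ∀ i j, j + 1 < m i → A (φ i (j + 1)) = - B (φ i j))
    (hqlast : ∀ i (x : X), q i (m i - 1) (A x) = 0)
    (hqchain : ∀ i j (x : X), j + 1 < m i → q i j (A x) = - q i (j + 1) (B x))
    (hbiorth : ∀ i k j l, j < m i → l < m k →
        q k l (B (φ i j)) = if i = k ∧ j = l then 1 else 0)
    -- `P_{2s}^{(j)}`, `Q_{2s}^{(j)}` and the partial sums `P_{2s} = Σ_{j ≥ s+1} P_{2s}^{(j)}`,
    -- `Q_{2s} = Σ_{j ≥ s+1} Q_{2s}^{(j)}`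
    (P : ℕ → ℕ → X → X) (Q : ℕ → ℕ → Y → Y) (Ps : ℕ → X → X) (Qs : ℕ → Y → Y)
    (hP : ∀ s j x, P s j x = ∑ i : Fin n, if m i = j then q i s (B x) • φ i s else 0)
    (hQ : ∀ s j y, Q s j y = ∑ i : Fin n, if m i = j then q i s y • B (φ i s) else 0)
    (hPs : ∀ s x, Ps s x = ∑ i : Fin n, q i s (B x) • φ i s)
    (hQs : ∀ s y, Qs s y = ∑ i : Fin n, q i s y • B (φ i s)) :
    -- pairwise disjointness of the projectors
    (∀ s j s' j' (x : X),
        P s j (P s' j' x) = if s = s' ∧ j = j' then P s j x else 0) ∧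
    (∀ s j s' j' (y : Y),
        Q s j (Q s' j' y) = if s = s' ∧ j = j' then Q s j y else 0) ∧
    -- intertwining with `B`
    (∀ s j (x : X), Q s j (B x) = B (P s j x)) ∧
    -- `A P_{20} x = 0`
    (∀ x : X, A (Ps 0 x) = 0) ∧
    -- `Q_{2s} A x = A P_{2(s+1)} x` for `s = 0, …, ν-2`
    (∀ s (x : X), s + 1 < ν → Qs s (A x) = A (Ps (s + 1) x)) ∧
    -- `Q_{2(ν-1)} A x = 0`
    (∀ x : X, Qs (ν - 1) (A x) = 0) := by
  have hP' : ∀ s j x, P s j x = biorthProj (fun a => (q a.1 a.2 : Y →ₗ[ℂ] ℂ) ∘ₗ B)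
      (fun a => φ a.1 a.2) (levelSet m s j) x := fun s j x => by
    rw [hP, sum_ite_eq_sum_levelSet m s j (fun a => q a.1 a.2 (B x) • φ a.1 a.2)]
    rfl
  have hQ' : ∀ s j y, Q s j y = biorthProj (fun a => (q a.1 a.2 : Y →ₗ[ℂ] ℂ))
      (fun a => B (φ a.1 a.2)) (levelSet m s j) y := fun s j y => by
    rw [hQ, sum_ite_eq_sum_levelSet m s j (fun a => q a.1 a.2 y • B (φ a.1 a.2))]
    rfl
  have hBφ0 : ∀ i j, m i ≤ j → B (φ i j) = 0 := fun i j h => by rw [hφ0 i j h, map_zero]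
  refine ⟨fun s j s' j' x => ?_, fun s j s' j' y => ?_, fun s j x => ?_, fun x => ?_,
    fun s x _ => ?_, fun x => ?_⟩
  · simp only [hP']
    exact biorthProj_levelSet_biorthProj_levelSet
      (canonical_biorth_smul B hφ0 hbiorth φ hφ0) s j s' j' x
  · simp only [hQ']
    exact biorthProj_levelSet_biorthProj_levelSet
      (canonical_biorth_smul B hφ0 hbiorth _ hBφ0) s j s' j' y
  · simp only [hQ, hP, map_sum, apply_ite B, map_smul, map_zero]
  · simp [hPs, heig]
  · rw [hQs, hPs, map_sum]
    exact sum_congr rfl fun i _ => by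
      rw [map_smul, smul_shift_of_chain A B (hφ0 i) (hq0 i) (hchain i) (hqlast i) (hqchain i)]
  · rw [hQs]
    exact sum_eq_zero fun i _ => by
      rw [apply_A_eq_zero_of_le A (hq0 i) (hqlast i) (hmν i), zero_smul]

/-- With the canonical system of a regular pencil `λA + B` of index `ν`, the projectors
`P_{2s}^{(j)} x = Σ_{i : m i = j} ⟨x, B*q_i^{s+1}⟩ φ_i^{s+1}` and
`Q_{2s}^{(j)} y = Σ_{i : m i = j} ⟨y, q_i^{s+1}⟩ B φ_i^{s+1}` are pairwise disjoint
projectors, and `Q_{2s}^{(j)} B x = B P_{2s}^{(j)} x`, `A P_{20} x = 0`,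
`Q_{2s} A x = A P_{2(s+1)} x` for `s = 0, …, ν-2`, and `Q_{2(ν-1)} A x = 0`.
(Indices are 0-based: the paper's `φ_i^{s+1}` is `φ i s`.) -/
theorem stmt_6
    {X Y : Type*} [NormedAddCommGroup X] [NormedSpace ℂ X] [CompleteSpace X]
    [NormedAddCommGroup Y] [NormedSpace ℂ Y] [CompleteSpace Y]
    (A B : X →ₗ[ℂ] Y)
    (n : ℕ) (m : Fin n → ℕ) (hm : ∀ i, 0 < m i)
    (ν : ℕ) (hνpos : 0 < ν) (hmν : ∀ i, m i ≤ ν)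
    (φ : Fin n → ℕ → X) (q : Fin n → ℕ → (Y →L[ℂ] ℂ))
    (hφ0 : ∀ i j, m i ≤ j → φ i j = 0)
    (hq0 : ∀ i j, m i ≤ j → q i j = 0)
    (heig : ∀ i, A (φ i 0) = 0)
    (hchain : ∀ i j, j + 1 < m i → A (φ i (j + 1)) = - B (φ i j))
    (hqlast : ∀ i (x : X), q i (m i - 1) (A x) = 0)
    (hqchain : ∀ i j (x : X), j + 1 < m i → q i j (A x) = - q i (j + 1) (B x))
    (hbiorth : ∀ i k j l, j < m i → l < m k →
        q k l (B (φ i j)) = if i = k ∧ j = l then 1 else 0)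
    -- `P_{2s}^{(j)}`, `Q_{2s}^{(j)}` and the partial sums `P_{2s} = Σ_{j ≥ s+1} P_{2s}^{(j)}`,
    -- `Q_{2s} = Σ_{j ≥ s+1} Q_{2s}^{(j)}`
    (P : ℕ → ℕ → X → X) (Q : ℕ → ℕ → Y → Y) (Ps : ℕ → X → X) (Qs : ℕ → Y → Y)
    (hP : ∀ s j x, P s j x = ∑ i : Fin n, if m i = j then q i s (B x) • φ i s else 0)
    (hQ : ∀ s j y, Q s j y = ∑ i : Fin n, if m i = j then q i s y • B (φ i s) else 0)
    (hPs : ∀ s x, Ps s x = ∑ i : Fin n, q i s (B x) • φ i s)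
    (hQs : ∀ s y, Qs s y = ∑ i : Fin n, q i s y • B (φ i s)) :
    -- pairwise disjointness of the projectors
    (∀ s j s' j' (x : X),
        P s j (P s' j' x) = if s = s' ∧ j = j' then P s j x else 0) ∧
    (∀ s j s' j' (y : Y),
        Q s j (Q s' j' y) = if s = s' ∧ j = j' then Q s j y else 0) ∧
    -- intertwining with `B`
    (∀ s j (x : X), Q s j (B x) = B (P s j x)) ∧
    -- `A P_{20} x = 0`
    (∀ x : X, A (Ps 0 x) = 0) ∧
    -- `Q_{2s} A x = A P_{2(s+1)} x` for `s = 0, …, ν-2`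
    (∀ s (x : X), s + 1 < ν → Qs s (A x) = A (Ps (s + 1) x)) ∧
    -- `Q_{2(ν-1)} A x = 0`
    (∀ x : X, Qs (ν - 1) (A x) = 0) :=
  stmt_6_general A B n m ν hmν φ q hφ0 hq0 heig hchain hqlast hqchain hbiorth P Q Ps Qs hP hQ hPs
    hQs
end

section
/- Define Ã = A + Σ_{i=1}^n ⟨·, B*q_i^1⟩ Bφ_i^{m_i} : D → Y. Then Ã has a bounded inverse Ã⁻¹ ∈ L(Y, D), given explicitly by Ã⁻¹ = A^{(−1)} + Σ_{i=1}^n ⟨·, q_i^{m_i}⟩ φ_i^1, where A^{(−1)} is the semi-inverse of A determined by A^{(−1)}A = P₁ + P_{2Σ}, A A^{(−1)} = Q₁ + Q_{2Σ}, A^{(−1)} = (P₁+P_{2Σ})A^{(−1)}. Moreover Ã⁻¹ A x = (P₁ + P_{2Σ}) x for x ∈ D and A Ã⁻¹ y = (Q₁ + Q_{2Σ}) y for y ∈ Y. -/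
/-!
Both `Ã` and `Ã⁻¹` are finite-rank perturbations of `A` and of its semi-inverse `A^{(-1)}`.
The perturbation of `A` maps the defect `ker A = span {φ_i^1}` of `A^{(-1)} A` onto the defect
`span {B φ_i^{m_i}}` of `A A^{(-1)}`, and the perturbation of `A^{(-1)}` maps it back; the
biorthogonality of the canonical system makes these two rank-`n` corrections exactly cancel the
defects, while `A^{(-1)}` kills `span {B φ_i^{m_i}}` and `q_i^{m_i}` kills the range of `A`.
-/

namespace LinearMap

variable {R X ι : Type*} [CommRing R] [AddCommGroup X] [Module R X] [Fintype ι]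

theorem dual_apply_sum_smul_of_biorthogonal [DecidableEq ι] {ℓ : ι → Module.Dual R X}
    {u : ι → X} (h : ∀ i k, ℓ k (u i) = if i = k then 1 else 0) (c : ι → R) (k : ι) :
    ℓ k (∑ i, c i • u i) = c k := by
  simp [h]

variable {Y : Type*} [AddCommGroup Y] [Module R Y]

def addFiniteRank (A : X →ₗ[R] Y) (p : ι → Module.Dual R X) (b : ι → Y) : X →ₗ[R] Y :=
  A + ∑ i, (p i).smulRight (b i)

@[simp]
theorem addFiniteRank_apply (A : X →ₗ[R] Y) (p : ι → Module.Dual R X) (b : ι → Y) (x : X) :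
    A.addFiniteRank p b x = A x + ∑ i, p i x • b i := by
  simp [addFiniteRank, LinearMap.sum_apply]

variable {A : X →ₗ[R] Y} {S : Y →ₗ[R] X}
  {e : ι → X} {b : ι → Y} {p : ι → Module.Dual R X} {r : ι → Module.Dual R Y}

theorem addFiniteRank_apply_of_dual_comp_eq_zero (hrA : ∀ i x, r i (A x) = 0) (x : X) :
    S.addFiniteRank r e (A x) = S (A x) := by
  simp [hrA]

theorem apply_addFiniteRank_of_comp_eq_zero (hAe : ∀ i, A (e i) = 0) (y : Y) :
    A (S.addFiniteRank r e y) = A (S y) := by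
  simp [hAe]

variable [DecidableEq ι]

theorem apply_sum_smul_eq_zero_of_eq_comp_sub
    (hS : ∀ y, S y = S (y - ∑ i, r i y • b i))
    (hrb : ∀ i k, r k (b i) = if i = k then 1 else 0) (c : ι → R) :
    S (∑ i, c i • b i) = 0 := by
  rw [hS]
  simp only [dual_apply_sum_smul_of_biorthogonal hrb, sub_self, map_zero]

theorem dual_apply_eq_zero_of_sum_smul_eq_zero
    (hS : ∀ y, ∑ i, p i (S y) • e i = 0)
    (hpe : ∀ i k, p k (e i) = if i = k then 1 else 0) (y : Y) (k : ι) :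
    p k (S y) = 0 := by
  rw [← dual_apply_sum_smul_of_biorthogonal hpe (fun i => p i (S y)) k, hS, map_zero]

theorem leftInverse_addFiniteRank
    (hSA : ∀ x, S (A x) = x - ∑ i, p i x • e i)
    (hS : ∀ y, S y = S (y - ∑ i, r i y • b i))
    (hrA : ∀ i x, r i (A x) = 0)
    (hrb : ∀ i k, r k (b i) = if i = k then 1 else 0) :
    Function.LeftInverse (S.addFiniteRank r e) (A.addFiniteRank p b) := fun x => by
  have hSb := apply_sum_smul_eq_zero_of_eq_comp_sub hS hrb (fun i => p i x)
  simp [hSA, hSb, hrA, dual_apply_sum_smul_of_biorthogonal hrb]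

theorem rightInverse_addFiniteRank
    (hAS : ∀ y, A (S y) = y - ∑ i, r i y • b i)
    (hS : ∀ y, ∑ i, p i (S y) • e i = 0)
    (hAe : ∀ i, A (e i) = 0)
    (hpe : ∀ i k, p k (e i) = if i = k then 1 else 0) :
    Function.RightInverse (S.addFiniteRank r e) (A.addFiniteRank p b) := fun y => by
  simp [hAS, hAe, dual_apply_eq_zero_of_sum_smul_eq_zero hS hpe,
    dual_apply_sum_smul_of_biorthogonal hpe]

end LinearMap

-- Indices are 0-based: the paper's `φ_i^1` is `φ i 0` and `q_i^{m_i}` is `q i (m i - 1)`.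
theorem stmt_7_general
    {X Y : Type*} [NormedAddCommGroup X] [NormedSpace ℂ X]
    [NormedAddCommGroup Y] [NormedSpace ℂ Y]
    (A B : X →ₗ[ℂ] Y)
    (n : ℕ) (m : Fin n → ℕ) (hm : ∀ i, 0 < m i)
    (φ : Fin n → ℕ → X) (q : Fin n → ℕ → (Y →L[ℂ] ℂ))
    (heig : ∀ i, A (φ i 0) = 0)
    (hqlast : ∀ i (x : X), q i (m i - 1) (A x) = 0)
    (hbiorth : ∀ i k j l, j < m i → l < m k →
        q k l (B (φ i j)) = if i = k ∧ j = l then 1 else 0)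
    -- the (bounded) semi-inverse `A^{(-1)}` of `A`
    (Ainv : Y →L[ℂ] X)
    -- `A^{(-1)} A = P₁ + P_{2Σ} = I - P_{20}`
    (hAinvA : ∀ x, Ainv (A x) = x - ∑ i : Fin n, q i 0 (B x) • φ i 0)
    -- `A A^{(-1)} = Q₁ + Q_{2Σ} = I - Q_{2*}`
    (hAAinv : ∀ y, A (Ainv y) = y - ∑ i : Fin n, q i (m i - 1) y • B (φ i (m i - 1)))
    -- `A^{(-1)} = A^{(-1)} (Q₁ + Q_{2Σ})`
    (hAinvQ : ∀ y, Ainv y = Ainv (y - ∑ i : Fin n, q i (m i - 1) y • B (φ i (m i - 1))))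
    -- `A^{(-1)} = (P₁ + P_{2Σ}) A^{(-1)}`, i.e. `P_{20} A^{(-1)} = 0`
    (hPAinv : ∀ y, (∑ i : Fin n, q i 0 (B (Ainv y)) • φ i 0) = 0) :
    let tA : X → Y := fun x => A x + ∑ i : Fin n, q i 0 (B x) • B (φ i (m i - 1))
    let tAinv : Y → X := fun y => Ainv y + ∑ i : Fin n, q i (m i - 1) y • φ i 0
    -- `Ã⁻¹` is a two-sided inverse of `Ã`
    (∀ x, tAinv (tA x) = x) ∧
    (∀ y, tA (tAinv y) = y) ∧
    -- `Ã⁻¹ A x = (P₁ + P_{2Σ}) x`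
    (∀ x, tAinv (A x) = x - ∑ i : Fin n, q i 0 (B x) • φ i 0) ∧
    -- `A Ã⁻¹ y = (Q₁ + Q_{2Σ}) y`
    (∀ y, A (tAinv y) = y - ∑ i : Fin n, q i (m i - 1) y • B (φ i (m i - 1))) ∧
    -- `Ã⁻¹` is bounded: `Ã⁻¹ ∈ L(Y, D)`
    (∃ T : Y →L[ℂ] X, ∀ y, T y = tAinv y) := by
  intro tA tAinv
  have hbiorth_diag (j : Fin n → ℕ) (hj : ∀ i, j i < m i) (i k : Fin n) :
      q k (j k) (B (φ i (j i))) = if i = k then 1 else 0 := by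
    rw [hbiorth i k _ _ (hj i) (hj k)]
    by_cases hik : i = k
    · subst hik; simp
    · simp [hik]
  have hpe := hbiorth_diag (fun _ => 0) hm
  have hrb := hbiorth_diag (fun i => m i - 1) fun i => Nat.sub_lt (hm i) one_pos
  let p : Fin n → Module.Dual ℂ X := fun i => (q i 0 : Y →ₗ[ℂ] ℂ) ∘ₗ B
  let r : Fin n → Module.Dual ℂ Y := fun i => q i (m i - 1)
  let S : Y →ₗ[ℂ] X := Ainv
  have htA x : tA x = A.addFiniteRank p (fun i => B (φ i (m i - 1))) x := by simp [tA, p]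
  have htAinv y : tAinv y = S.addFiniteRank r (fun i => φ i 0) y := by simp [tAinv, r, S]
  refine ⟨fun x => ?_, fun y => ?_, fun x => ?_, fun y => ?_, ?_⟩
  · rw [htA, htAinv]
    exact LinearMap.leftInverse_addFiniteRank (S := S) (r := r) hAinvA hAinvQ hqlast hrb x
  · rw [htA, htAinv]
    exact LinearMap.rightInverse_addFiniteRank (p := p) hAAinv hPAinv heig hpe y
  · rw [htAinv, LinearMap.addFiniteRank_apply_of_dual_comp_eq_zero (r := r) hqlast]
    exact hAinvA x
  · rw [htAinv, LinearMap.apply_addFiniteRank_of_comp_eq_zero heig]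
    exact hAAinv y
  · refine ⟨Ainv + ∑ i, (q i (m i - 1)).smulRight (φ i 0), fun y => ?_⟩
    simp [tAinv]

/-- The operator `Ã = A + Σᵢ ⟨·, B*q_i^1⟩ B φ_i^{m_i}` has a bounded inverse given explicitly
by `Ã⁻¹ = A^{(-1)} + Σᵢ ⟨·, q_i^{m_i}⟩ φ_i^1`, where `A^{(-1)}` is the semi-inverse of `A`
determined by `A^{(-1)}A = P₁ + P_{2Σ} = I - P_{20}`, `A A^{(-1)} = Q₁ + Q_{2Σ} = I - Q_{2*}`
and `A^{(-1)} = A^{(-1)}(Q₁ + Q_{2Σ})` (equivalently `(P₁+P_{2Σ})A^{(-1)} = A^{(-1)}`).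
Moreover `Ã⁻¹ A x = (P₁ + P_{2Σ}) x` and `A Ã⁻¹ y = (Q₁ + Q_{2Σ}) y`.
(Indices are 0-based: the paper's `φ_i^1` is `φ i 0` and `q_i^{m_i}` is `q i (m i - 1)`.) -/
theorem stmt_7
    {X Y : Type*} [NormedAddCommGroup X] [NormedSpace ℂ X] [CompleteSpace X]
    [NormedAddCommGroup Y] [NormedSpace ℂ Y] [CompleteSpace Y]
    (A B : X →ₗ[ℂ] Y)
    (n : ℕ) (m : Fin n → ℕ) (hm : ∀ i, 0 < m i)
    (φ : Fin n → ℕ → X) (q : Fin n → ℕ → (Y →L[ℂ] ℂ))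
    (hφ0 : ∀ i j, m i ≤ j → φ i j = 0)
    (hq0 : ∀ i j, m i ≤ j → q i j = 0)
    (heig : ∀ i, A (φ i 0) = 0)
    (hchain : ∀ i j, j + 1 < m i → A (φ i (j + 1)) = - B (φ i j))
    (hqlast : ∀ i (x : X), q i (m i - 1) (A x) = 0)
    (hqchain : ∀ i j (x : X), j + 1 < m i → q i j (A x) = - q i (j + 1) (B x))
    (hbiorth : ∀ i k j l, j < m i → l < m k →
        q k l (B (φ i j)) = if i = k ∧ j = l then 1 else 0)
    (hindep : LinearIndependent ℂ (fun i : Fin n => φ i 0))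
    -- the (bounded) semi-inverse `A^{(-1)}` of `A`
    (Ainv : Y →L[ℂ] X)
    -- `A^{(-1)} A = P₁ + P_{2Σ} = I - P_{20}`
    (hAinvA : ∀ x, Ainv (A x) = x - ∑ i : Fin n, q i 0 (B x) • φ i 0)
    -- `A A^{(-1)} = Q₁ + Q_{2Σ} = I - Q_{2*}`
    (hAAinv : ∀ y, A (Ainv y) = y - ∑ i : Fin n, q i (m i - 1) y • B (φ i (m i - 1)))
    -- `A^{(-1)} = A^{(-1)} (Q₁ + Q_{2Σ})`
    (hAinvQ : ∀ y, Ainv y = Ainv (y - ∑ i : Fin n, q i (m i - 1) y • B (φ i (m i - 1))))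
    -- `A^{(-1)} = (P₁ + P_{2Σ}) A^{(-1)}`, i.e. `P_{20} A^{(-1)} = 0`
    (hPAinv : ∀ y, (∑ i : Fin n, q i 0 (B (Ainv y)) • φ i 0) = 0) :
    let tA : X → Y := fun x => A x + ∑ i : Fin n, q i 0 (B x) • B (φ i (m i - 1))
    let tAinv : Y → X := fun y => Ainv y + ∑ i : Fin n, q i (m i - 1) y • φ i 0
    -- `Ã⁻¹` is a two-sided inverse of `Ã`
    (∀ x, tAinv (tA x) = x) ∧
    (∀ y, tA (tAinv y) = y) ∧
    -- `Ã⁻¹ A x = (P₁ + P_{2Σ}) x`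
    (∀ x, tAinv (A x) = x - ∑ i : Fin n, q i 0 (B x) • φ i 0) ∧
    -- `A Ã⁻¹ y = (Q₁ + Q_{2Σ}) y`
    (∀ y, A (tAinv y) = y - ∑ i : Fin n, q i (m i - 1) y • B (φ i (m i - 1))) ∧
    -- `Ã⁻¹` is bounded: `Ã⁻¹ ∈ L(Y, D)`
    (∃ T : Y →L[ℂ] X, ∀ y, T y = tAinv y) :=
  stmt_7_general A B n m hm φ q heig hqlast hbiorth Ainv hAinvA hAAinv hAinvQ hPAinv
end

section
/- (Local implicit function without differentiability, Lipschitz version) Let F ∈ C(T×D_X×D_Y, Z) with T ⊆ ℝ an interval and D_X ⊆ X, D_Y ⊆ Y open, satisfy a local Lipschitz condition in (x,y). Suppose (t',x',y') satisfies F(t',x',y')=0 and there exist neighborhoods U_δ(t',x') and U_ε(y') and an invertible operator W ∈ L(Y,Z) with W⁻¹ ∈ L(Z,Y) such that ‖F(t,x,y¹)−F(t,x,y²)−W[y¹−y²]‖ ≤ k(δ,ε)‖y¹−y²‖ for all (t,x) ∈ U_δ(t',x'), y¹,y² ∈ U_ε(y'), with lim_{δ,ε→0} k(δ,ε) < ‖W⁻¹‖⁻¹.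 Then there exist neighborhoods U_r(t',x') ⊂ U_δ(t',x') and U_ρ(y') ⊂ U_ε(y') and a unique continuous function υ : U_r(t',x') → U_ρ(y') with υ(t',x')=y', F(t,x,υ(t,x))=0 on U_r(t',x'), and υ Lipschitz in x on U_r(t',x'). -/
/-!
For fixed `(t, x)`, the zeros of `F t x` near `y'` are the fixed points of the chord map
`y ↦ y - W⁻¹ F(t, x, y)`, which the estimate on `F - W` makes a contraction with constant
`q = k ‖W⁻¹‖ < 1` on a ball around `y'`; continuity of `F` at `(t', x', y')` makes it map a smaller
closed ball into itself, so Banach's theorem gives a unique zero `υ(t, x)` there.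

If `u` is a fixed point of a `q`-contraction `g`, then `dist y u ≤ dist y (g y) / (1 - q)`. Taking
`y = υ(t₀, x₀)` and `g` the chord map at `(t, x)` bounds `‖υ(t, x) - υ(t₀, x₀)‖` by
`‖W⁻¹‖ ‖F(t, x, υ(t₀, x₀))‖ / (1 - q)`: continuity of `F` gives continuity of `υ`, and the
Lipschitz condition on `F` in `x` gives the Lipschitz bound for `υ`.
-/

open Filter Topology Function Metric Set
open scoped NNReal

section FixedPoints

variable {α : Type*} {f : α → α} {s : Set α} {K : ℝ≥0}

theorem LipschitzOnWith.dist_le_of_isFixedPt [PseudoMetricSpace α]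
    (hf : LipschitzOnWith K f s) (hK : K < 1) {x y : α} (hx : x ∈ s) (hy : y ∈ s)
    (hfy : IsFixedPt f y) : dist x y ≤ dist x (f x) / (1 - K) := by
  have hK' : (0 : ℝ) < 1 - K := sub_pos.2 (by exact_mod_cast hK)
  have hcontr : dist (f x) y ≤ K * dist x y := by
    simpa only [hfy.eq] using hf.dist_le_mul x hx y hy
  rw [le_div_iff₀ hK']
  nlinarith [dist_triangle x (f x) y]

theorem LipschitzOnWith.eq_of_isFixedPt [MetricSpace α]
    (hf : LipschitzOnWith K f s) (hK : K < 1) {x y : α} (hx : x ∈ s) (hy : y ∈ s)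
    (hfx : IsFixedPt f x) (hfy : IsFixedPt f y) : x = y := by
  have := hf.dist_le_of_isFixedPt hK hx hy hfy
  rw [hfx.eq, dist_self, zero_div] at this
  exact dist_le_zero.1 this

theorem LipschitzOnWith.exists_isFixedPt_mem_closedBall [MetricSpace α] [CompleteSpace α]
    {c : α} {R : ℝ} (hf : LipschitzOnWith K f (closedBall c R)) (hK : K < 1)
    (hc : dist c (f c) ≤ (1 - K) * R) : ∃ x ∈ closedBall c R, IsFixedPt f x := by
  have hK' : (0 : ℝ) < 1 - K := sub_pos.2 (by exact_mod_cast hK)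
  have hR : 0 ≤ R := nonneg_of_mul_nonneg_right (dist_nonneg.trans hc) hK'
  have hc_mem : c ∈ closedBall c R := mem_closedBall_self hR
  have hmaps : MapsTo f (closedBall c R) (closedBall c R) := by
    intro x hx
    have hfx := hf.dist_le_mul x hx c hc_mem
    rw [mem_closedBall] at hx ⊢
    calc dist (f x) c ≤ dist (f x) (f c) + dist c (f c) := dist_triangle_right _ _ _
      _ ≤ K * R + (1 - K) * R := by gcongr; exact hfx.trans (by gcongr)
      _ = R := by ring
  obtain ⟨x, hx, hfx, -⟩ := ContractingWith.exists_fixedPoint' isClosed_closedBall.isComplete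
    hmaps ⟨hK, hf.to_restrict⟩ hc_mem (edist_ne_top _ _)
  exact ⟨x, hx, hfx⟩

variable {P : Type*} {Φ : P → α → α} {S : Set P} {υ : P → α}

theorem continuousOn_of_isFixedPt [TopologicalSpace P] [PseudoMetricSpace α] (hK : K < 1)
    (hΦ : ∀ p ∈ S, LipschitzOnWith K (Φ p) s) (hυs : ∀ p ∈ S, υ p ∈ s)
    (hυ : ∀ p ∈ S, IsFixedPt (Φ p) (υ p)) (hcont : ∀ y ∈ s, ContinuousOn (fun p ↦ Φ p y) S) :
    ContinuousOn υ S := by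
  intro p₀ hp₀
  have hbound : ∀ p ∈ S, dist (υ p) (υ p₀) ≤ dist (υ p₀) (Φ p (υ p₀)) / (1 - K) :=
    fun p hp ↦ dist_comm (υ p) _ ▸
      (hΦ p hp).dist_le_of_isFixedPt hK (hυs p₀ hp₀) (hυs p hp) (hυ p hp)
  have hlim : Tendsto (fun p ↦ dist (υ p₀) (Φ p (υ p₀)) / (1 - K)) (𝓝[S] p₀) (𝓝 0) := by
    have hΦ_lim := (tendsto_const_nhds (x := υ p₀)).dist (hcont _ (hυs p₀ hp₀) p₀ hp₀)
    simpa only [(hυ p₀ hp₀).eq, dist_self, zero_div] using hΦ_lim.div_const (1 - (K : ℝ))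
  exact tendsto_iff_dist_tendsto_zero.2 <|
    squeeze_zero' (.of_forall fun _ ↦ dist_nonneg) (eventually_mem_nhdsWithin.mono hbound) hlim

theorem lipschitzOnWith_of_isFixedPt [PseudoMetricSpace P] [PseudoMetricSpace α] {L : ℝ≥0}
    (hK : K < 1) (hΦ : ∀ p ∈ S, LipschitzOnWith K (Φ p) s) (hυs : ∀ p ∈ S, υ p ∈ s)
    (hυ : ∀ p ∈ S, IsFixedPt (Φ p) (υ p)) (hlip : ∀ y ∈ s, LipschitzOnWith L (fun p ↦ Φ p y) S) :
    LipschitzOnWith (L / (1 - K)) υ S := by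
  refine LipschitzOnWith.of_dist_le_mul fun p hp p' hp' ↦ ?_
  rw [NNReal.coe_div, NNReal.coe_sub hK.le, NNReal.coe_one, div_mul_eq_mul_div, dist_comm]
  calc dist (υ p') (υ p) ≤ dist (υ p') (Φ p (υ p')) / (1 - K) :=
        (hΦ p hp).dist_le_of_isFixedPt hK (hυs p' hp') (hυs p hp) (hυ p hp)
    _ = dist (Φ p' (υ p')) (Φ p (υ p')) / (1 - K) := by rw [(hυ p' hp').eq]
    _ ≤ L * dist p' p / (1 - K) := by
        gcongr
        · exact sub_nonneg.2 (by exact_mod_cast hK.le)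
        · exact (hlip _ (hυs p' hp')).dist_le_mul p' hp' p hp
    _ = L * dist p p' / (1 - K) := by rw [dist_comm]

end FixedPoints

section ChordMap

variable {𝕜 Y Z : Type*} [NontriviallyNormedField 𝕜] [NormedAddCommGroup Y] [NormedSpace 𝕜 Y]
  [NormedAddCommGroup Z] [NormedSpace 𝕜 Z] (Winv : Z →L[𝕜] Y)

/-- The map `F̂(t, x, ·)` of the paper: a simplified Newton step with frozen derivative `W`. -/
def chordMap (f : Y → Z) (y : Y) : Y := y - Winv (f y)

theorem isFixedPt_chordMap_iff (hWinv : Injective Winv) {f : Y → Z} {y : Y} :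
    IsFixedPt (chordMap Winv f) y ↔ f y = 0 := by
  rw [IsFixedPt, chordMap, sub_eq_self, map_eq_zero_iff Winv hWinv]

theorem lipschitzOnWith_chordMap_apply {P : Type*} [PseudoMetricSpace P] {f : P → Y → Z}
    {S : Set P} {L : ℝ≥0} {y : Y} (hf : LipschitzOnWith L (fun p ↦ f p y) S) :
    LipschitzOnWith (‖Winv‖₊ * L) (fun p ↦ chordMap Winv (f p) y) S :=
  LipschitzOnWith.of_dist_le_mul fun p hp p' hp' ↦ by
    simpa only [chordMap, dist_sub_left, comp_apply] using
      (Winv.lipschitz.comp_lipschitzOnWith hf).dist_le_mul p hp p' hp'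

theorem ApproximatesLinearOn.lipschitzOnWith_chordMap {W : Y →L[𝕜] Z} (hW : LeftInverse Winv W)
    {f : Y → Z} {s : Set Y} {k : ℝ≥0} (hf : ApproximatesLinearOn f W s k) :
    LipschitzOnWith (k * ‖Winv‖₊) (chordMap Winv f) s := by
  refine LipschitzOnWith.of_dist_le_mul fun y₁ h₁ y₂ h₂ ↦ ?_
  have hdiff : chordMap Winv f y₁ - chordMap Winv f y₂ = -Winv (f y₁ - f y₂ - W (y₁ - y₂)) := by
    simp only [chordMap, map_sub, hW _]
    abel
  rw [dist_eq_norm, dist_eq_norm, hdiff, norm_neg, NNReal.coe_mul, coe_nnnorm]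
  calc ‖Winv (f y₁ - f y₂ - W (y₁ - y₂))‖ ≤ ‖Winv‖ * (k * ‖y₁ - y₂‖) :=
        (Winv.le_opNorm _).trans (by gcongr; exact hf y₁ h₁ y₂ h₂)
    _ = k * ‖Winv‖ * ‖y₁ - y₂‖ := by ring

end ChordMap

section ImplicitFunction

variable {𝕜 A B Y Z : Type*} [NontriviallyNormedField 𝕜] [TopologicalSpace A] [PseudoMetricSpace B]
  [NormedAddCommGroup Y] [NormedSpace 𝕜 Y] [CompleteSpace Y]
  [NormedAddCommGroup Z] [NormedSpace 𝕜 Z]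

theorem exists_implicit_function_of_approximatesLinearOn {f : A × B → Y → Z} {W : Y →L[𝕜] Z}
    {Winv : Z →L[𝕜] Y} (hW₁ : LeftInverse Winv W) (hW₂ : LeftInverse W Winv)
    {Sa : Set A} {Sb : Set B} {y₀ : Y} {ρ : ℝ} (hρ : 0 < ρ) {k L : ℝ≥0} (hkW : k * ‖Winv‖₊ < 1)
    (hf : ∀ p ∈ Sa ×ˢ Sb, ApproximatesLinearOn (f p) W (ball y₀ ρ) k)
    (hsmall : ∀ p ∈ Sa ×ˢ Sb, ‖Winv (f p y₀)‖ ≤ (1 - k * ‖Winv‖) * (ρ / 2))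
    (hcont : ∀ y ∈ ball y₀ ρ, ContinuousOn (fun p ↦ f p y) (Sa ×ˢ Sb))
    (hlip : ∀ a ∈ Sa, ∀ y ∈ ball y₀ ρ, LipschitzOnWith L (fun b ↦ f (a, b) y) Sb) :
    ∃ υ : A × B → Y, (∀ p ∈ Sa ×ˢ Sb, υ p ∈ ball y₀ ρ ∧ f p (υ p) = 0) ∧
      (∀ p ∈ Sa ×ˢ Sb, ∀ y ∈ ball y₀ ρ, f p y = 0 → y = υ p) ∧
      ContinuousOn υ (Sa ×ˢ Sb) ∧
      ∀ a ∈ Sa, LipschitzOnWith (‖Winv‖₊ * L / (1 - k * ‖Winv‖₊)) (fun b ↦ υ (a, b)) Sb := by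
  set Φ : A × B → Y → Y := fun p ↦ chordMap Winv (f p)
  have hΦ_fix (p : A × B) (y : Y) : IsFixedPt (Φ p) y ↔ f p y = 0 :=
    isFixedPt_chordMap_iff Winv hW₂.injective
  have hΦ_lip : ∀ p ∈ Sa ×ˢ Sb, LipschitzOnWith (k * ‖Winv‖₊) (Φ p) (ball y₀ ρ) :=
    fun p hp ↦ (hf p hp).lipschitzOnWith_chordMap Winv hW₁
  have hclosedBall : closedBall y₀ (ρ / 2) ⊆ ball y₀ ρ := closedBall_subset_ball (half_lt_self hρ)
  have : Nonempty Y := ⟨y₀⟩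
  choose! υ hυ_mem hυ_fix using fun p (hp : p ∈ Sa ×ˢ Sb) ↦
    ((hΦ_lip p hp).mono hclosedBall).exists_isFixedPt_mem_closedBall hkW <| by
      simpa only [Φ, chordMap, dist_eq_norm, sub_sub_cancel, NNReal.coe_mul, coe_nnnorm]
        using hsmall p hp
  have hυ_ball : ∀ p ∈ Sa ×ˢ Sb, υ p ∈ ball y₀ ρ := fun p hp ↦ hclosedBall (hυ_mem p hp)
  refine ⟨υ, fun p hp ↦ ⟨hυ_ball p hp, (hΦ_fix _ _).1 (hυ_fix p hp)⟩,
    fun p hp y hy hfy ↦ (hΦ_lip p hp).eq_of_isFixedPt hkW hy (hυ_ball p hp) ((hΦ_fix _ _).2 hfy)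
      (hυ_fix p hp), ?_, fun a ha ↦ ?_⟩
  · exact continuousOn_of_isFixedPt hkW hΦ_lip hυ_ball hυ_fix fun y hy ↦
      continuousOn_const.sub (Winv.continuous.comp_continuousOn (hcont y hy))
  · exact lipschitzOnWith_of_isFixedPt hkW (fun b hb ↦ hΦ_lip _ ⟨ha, hb⟩)
      (fun b hb ↦ hυ_ball _ ⟨ha, hb⟩) (fun b hb ↦ hυ_fix _ ⟨ha, hb⟩)
      fun y hy ↦ lipschitzOnWith_chordMap_apply Winv (hlip a ha y hy)

end ImplicitFunction

theorem exists_pos_forall_dist_lt_of_continuousWithinAt {A B β : Type*} [PseudoMetricSpace A]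
    [PseudoMetricSpace B] [PseudoMetricSpace β] {g : A × B → β} {T : Set A} {D : Set B} {a : A}
    {b : B} (hD : IsOpen D) (hb : b ∈ D) (hg : ContinuousWithinAt g (T ×ˢ D) (a, b)) {η δ : ℝ}
    (hη : 0 < η) (hδ : 0 < δ) :
    ∃ r > 0, r ≤ δ ∧ ball b r ⊆ D ∧
      ∀ p ∈ (T ∩ ball a r) ×ˢ ball b r, dist (g p) (g (a, b)) < η := by
  obtain ⟨r₁, hr₁, hg⟩ := Metric.continuousWithinAt_iff.1 hg η hη
  obtain ⟨r₂, hr₂, hball⟩ := isOpen_iff.1 hD b hb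
  have hr₂D : ball b (min (min r₁ r₂) δ) ⊆ D :=
    (ball_subset_ball ((min_le_left _ _).trans (min_le_right _ _))).trans hball
  refine ⟨min (min r₁ r₂) δ, by positivity, min_le_right _ _, hr₂D, ?_⟩
  rintro ⟨a₁, b₁⟩ ⟨⟨ha₁, ha₁r⟩, hb₁r⟩
  refine hg ⟨ha₁, hr₂D hb₁r⟩ ?_
  rw [Prod.dist_eq]
  exact max_lt (ha₁r.trans_le ((min_le_left _ _).trans (min_le_left _ _)))
    (hb₁r.trans_le ((min_le_left _ _).trans (min_le_left _ _)))

section LocalEstimates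

variable {X Y Z : Type*} [NormedAddCommGroup X] [NormedAddCommGroup Y] [NormedAddCommGroup Z]
  {F : ℝ → X → Y → Z} {T : Set ℝ} {DX : Set X} {DY : Set Y} {t' : ℝ} {x' : X} {y' : Y} {r ρ : ℝ}

theorem forall_approximatesLinearOn_of_local [NormedSpace ℝ Y] [NormedSpace ℝ Z]
    {W : Y →L[ℝ] Z} {δ ε k : ℝ} (hk : 0 ≤ k)
    (hcontr : ∀ t ∈ T, |t - t'| < δ → ∀ x ∈ DX, ‖x - x'‖ < δ →
        ∀ y₁ ∈ DY, ∀ y₂ ∈ DY, ‖y₁ - y'‖ < ε → ‖y₂ - y'‖ < ε →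
          ‖F t x y₁ - F t x y₂ - W (y₁ - y₂)‖ ≤ k * ‖y₁ - y₂‖)
    (hrδ : r ≤ δ) (hρε : ρ ≤ ε) (hrDX : ball x' r ⊆ DX) (hρDY : ball y' ρ ⊆ DY) :
    ∀ p ∈ (T ∩ ball t' r) ×ˢ ball x' r,
      ApproximatesLinearOn (F p.1 p.2) W (ball y' ρ) k.toNNReal := by
  rintro ⟨t, x⟩ ⟨⟨ht, htr⟩, hxr⟩ y₁ hy₁ y₂ hy₂
  rw [Real.coe_toNNReal k hk]
  exact hcontr t ht ((mem_ball_iff_norm.1 htr).trans_le hrδ) x (hrDX hxr)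
    ((mem_ball_iff_norm.1 hxr).trans_le hrδ) y₁ (hρDY hy₁) y₂ (hρDY hy₂)
    ((mem_ball_iff_norm.1 hy₁).trans_le hρε) ((mem_ball_iff_norm.1 hy₂).trans_le hρε)

theorem forall_lipschitzOnWith_of_local {δ L : ℝ}
    (hF : ∀ t ∈ T, |t - t'| < δ →
        ∀ x₁ ∈ DX, ∀ x₂ ∈ DX, ‖x₁ - x'‖ < δ → ‖x₂ - x'‖ < δ →
        ∀ y₁ ∈ DY, ∀ y₂ ∈ DY, ‖y₁ - y'‖ < δ → ‖y₂ - y'‖ < δ →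
          ‖F t x₁ y₁ - F t x₂ y₂‖ ≤ L * (‖x₁ - x₂‖ + ‖y₁ - y₂‖))
    (hrδ : r ≤ δ) (hρδ : ρ ≤ δ) (hrDX : ball x' r ⊆ DX) (hρDY : ball y' ρ ⊆ DY) :
    ∀ t ∈ T ∩ ball t' r, ∀ y ∈ ball y' ρ,
      LipschitzOnWith L.toNNReal (fun x ↦ F t x y) (ball x' r) := by
  refine fun t ⟨ht, htr⟩ y hy ↦ LipschitzOnWith.of_dist_le' fun x₁ hx₁ x₂ hx₂ ↦ ?_
  have hyδ : ‖y - y'‖ < δ := (mem_ball_iff_norm.1 hy).trans_le hρδ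
  simpa only [dist_eq_norm, sub_self, norm_zero, add_zero] using
    hF t ht ((mem_ball_iff_norm.1 htr).trans_le hrδ) x₁ (hrDX hx₁) x₂ (hrDX hx₂)
      ((mem_ball_iff_norm.1 hx₁).trans_le hrδ) ((mem_ball_iff_norm.1 hx₂).trans_le hrδ)
      y (hρDY hy) y (hρDY hy) hyδ hyδ

end LocalEstimates

theorem stmt_8_general
    {X Y Z : Type*} [NormedAddCommGroup X] [NormedSpace ℝ X]
    [NormedAddCommGroup Y] [NormedSpace ℝ Y] [CompleteSpace Y]
    [NormedAddCommGroup Z] [NormedSpace ℝ Z]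
    (T : Set ℝ)
    (DX : Set X) (DY : Set Y) (hDX : IsOpen DX) (hDY : IsOpen DY)
    (F : ℝ → X → Y → Z)
    (hFcont : ContinuousOn (fun p : ℝ × X × Y => F p.1 p.2.1 p.2.2) (T ×ˢ DX ×ˢ DY))
    -- `F` satisfies locally a Lipschitz condition with respect to `(x, y)` on `T × D_X × D_Y`
    (hFlip : ∀ t' ∈ T, ∀ x' ∈ DX, ∀ y' ∈ DY, ∃ δ > (0:ℝ), ∃ L ≥ (0:ℝ),
        ∀ t ∈ T, |t - t'| < δ →
        ∀ x₁ ∈ DX, ∀ x₂ ∈ DX, ‖x₁ - x'‖ < δ → ‖x₂ - x'‖ < δ →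
        ∀ y₁ ∈ DY, ∀ y₂ ∈ DY, ‖y₁ - y'‖ < δ → ‖y₂ - y'‖ < δ →
          ‖F t x₁ y₁ - F t x₂ y₂‖ ≤ L * (‖x₁ - x₂‖ + ‖y₁ - y₂‖))
    (t' : ℝ) (x' : X) (y' : Y)
    (ht' : t' ∈ T) (hx' : x' ∈ DX) (hy' : y' ∈ DY)
    (hsol : F t' x' y' = 0)
    (W : Y →L[ℝ] Z) (Winv : Z →L[ℝ] Y)
    (hW₁ : ∀ y, Winv (W y) = y) (hW₂ : ∀ z, W (Winv z) = z)
    (δ ε k : ℝ) (hδ : 0 < δ) (hε : 0 < ε) (hk : 0 ≤ k) (hkW : k * ‖Winv‖ < 1)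
    (hcontr : ∀ t ∈ T, |t - t'| < δ → ∀ x ∈ DX, ‖x - x'‖ < δ →
        ∀ y₁ ∈ DY, ∀ y₂ ∈ DY, ‖y₁ - y'‖ < ε → ‖y₂ - y'‖ < ε →
          ‖F t x y₁ - F t x y₂ - W (y₁ - y₂)‖ ≤ k * ‖y₁ - y₂‖) :
    ∃ r > (0:ℝ), ∃ ρ > (0:ℝ), r ≤ δ ∧ ρ ≤ ε ∧
      Metric.ball x' r ⊆ DX ∧ Metric.ball y' ρ ⊆ DY ∧
      ∃ υ : ℝ → X → Y,
        υ t' x' = y' ∧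
        -- `υ` solves `F(t, x, υ(t,x)) = 0` and maps into `U_ρ(y')`
        (∀ t ∈ T, |t - t'| < r → ∀ x, ‖x - x'‖ < r →
            ‖υ t x - y'‖ < ρ ∧ F t x (υ t x) = 0) ∧
        -- continuity of `υ`
        ContinuousOn (fun p : ℝ × X => υ p.1 p.2)
          ((T ∩ Metric.ball t' r) ×ˢ Metric.ball x' r) ∧
        -- `υ` is Lipschitz in `x`
        (∃ L ≥ (0:ℝ), ∀ t ∈ T, |t - t'| < r →
            ∀ x₁, ‖x₁ - x'‖ < r → ∀ x₂, ‖x₂ - x'‖ < r →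
              ‖υ t x₁ - υ t x₂‖ ≤ L * ‖x₁ - x₂‖) ∧
        -- uniqueness of the solution in `U_ρ(y')`
        (∀ t ∈ T, |t - t'| < r → ∀ x, ‖x - x'‖ < r →
            ∀ y, ‖y - y'‖ < ρ → F t x y = 0 → y = υ t x) := by
  obtain ⟨δ₀, hδ₀, L₀, hL₀, hFlip⟩ := hFlip t' ht' x' hx' y' hy'
  obtain ⟨ρ, hρ, hρε, hρδ₀, hρDY⟩ : ∃ ρ > 0, ρ ≤ ε ∧ ρ ≤ δ₀ ∧ ball y' ρ ⊆ DY := by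
    obtain ⟨ε₁, hε₁, hball⟩ := isOpen_iff.1 hDY y' hy'
    exact ⟨min (min ε δ₀) ε₁, by positivity, (min_le_left _ _).trans (min_le_left _ _),
      (min_le_left _ _).trans (min_le_right _ _), (ball_subset_ball (min_le_right _ _)).trans hball⟩
  have hkW' : k.toNNReal * ‖Winv‖₊ < 1 := by
    rwa [← NNReal.coe_lt_coe, NNReal.coe_mul, Real.coe_toNNReal k hk, coe_nnnorm]
  have hF_cont (y : Y) (hy : y ∈ DY) : ContinuousOn (fun p : ℝ × X ↦ F p.1 p.2 y) (T ×ˢ DX) :=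
    hFcont.comp (f := fun p : ℝ × X ↦ (p.1, p.2, y)) (by fun_prop) fun p hp ↦ ⟨hp.1, hp.2, hy⟩
  obtain ⟨r, hr, hrδ, hrDX, hsmall⟩ := exists_pos_forall_dist_lt_of_continuousWithinAt hDX hx'
    (Winv.continuous.continuousAt.comp_continuousWithinAt (hF_cont y' hy' (t', x') ⟨ht', hx'⟩))
    (η := (1 - k * ‖Winv‖) * (ρ / 2)) (mul_pos (by linarith) (half_pos hρ)) (lt_min hδ hδ₀)
  have hmem {t : ℝ} (ht : t ∈ T) (htr : |t - t'| < r) {x : X} (hxr : ‖x - x'‖ < r) :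
      (t, x) ∈ (T ∩ ball t' r) ×ˢ ball x' r :=
    ⟨⟨ht, mem_ball_iff_norm.2 htr⟩, mem_ball_iff_norm.2 hxr⟩
  have hF_small : ∀ p ∈ (T ∩ ball t' r) ×ˢ ball x' r,
      ‖Winv (F p.1 p.2 y')‖ ≤ (1 - k.toNNReal * ‖Winv‖) * (ρ / 2) := by
    intro p hp
    simpa only [comp_apply, hsol, map_zero, dist_zero_right, Real.coe_toNNReal k hk]
      using (hsmall p hp).le
  obtain ⟨υ, hυ_sol, hυ_uniq, hυ_cont, hυ_lip⟩ :=
    exists_implicit_function_of_approximatesLinearOn hW₁ hW₂ hρ hkW'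
      (forall_approximatesLinearOn_of_local hk hcontr (hrδ.trans (min_le_left _ _)) hρε hrDX hρDY)
      hF_small (fun y hy ↦ (hF_cont y (hρDY hy)).mono (prod_mono inter_subset_left hrDX))
      (forall_lipschitzOnWith_of_local hFlip (hrδ.trans (min_le_right _ _)) hρδ₀ hrDX hρDY)
  have hbase : (t', x') ∈ (T ∩ ball t' r) ×ˢ ball x' r :=
    ⟨⟨ht', mem_ball_self hr⟩, mem_ball_self hr⟩
  refine ⟨r, hr, ρ, hρ, hrδ.trans (min_le_left _ _), hρε, hrDX, hρDY, fun t x ↦ υ (t, x),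
    (hυ_uniq _ hbase y' (mem_ball_self hρ) hsol).symm, fun t ht htr x hxr ↦ ?_, hυ_cont,
    ⟨_, NNReal.coe_nonneg _, fun t ht htr x₁ hx₁ x₂ hx₂ ↦ (hυ_lip t (hmem ht htr hx₁).1).norm_sub_le
      (mem_ball_iff_norm.2 hx₁) (mem_ball_iff_norm.2 hx₂)⟩,
    fun t ht htr x hxr y hy hFy ↦ hυ_uniq _ (hmem ht htr hxr) y (mem_ball_iff_norm.2 hy) hFy⟩
  obtain ⟨hυ_ball, hυ_zero⟩ := hυ_sol _ (hmem ht htr hxr)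
  exact ⟨mem_ball_iff_norm.1 hυ_ball, hυ_zero⟩

/-- Local implicit function theorem without differentiability (Lipschitz version):
if `F` is continuous on `T × D_X × D_Y`, locally Lipschitz in `(x, y)`, `F(t',x',y') = 0`,
and near `(t',x',y')` the map `F` satisfies the contraction-type inequality
`‖F(t,x,y¹) - F(t,x,y²) - W[y¹ - y²]‖ ≤ k ‖y¹ - y²‖` with an invertible `W ∈ L(Y,Z)` and
`k ‖W⁻¹‖ < 1`, then there exist neighborhoods `U_r(t',x')`, `U_ρ(y')` and a unique continuous
function `υ` with `υ(t',x') = y'`, `F(t,x,υ(t,x)) = 0`, `υ` Lipschitz in `x`. -/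
theorem stmt_8
    {X Y Z : Type*} [NormedAddCommGroup X] [NormedSpace ℝ X] [CompleteSpace X]
    [NormedAddCommGroup Y] [NormedSpace ℝ Y] [CompleteSpace Y]
    [NormedAddCommGroup Z] [NormedSpace ℝ Z] [CompleteSpace Z]
    (T : Set ℝ) (hT : T.OrdConnected)
    (DX : Set X) (DY : Set Y) (hDX : IsOpen DX) (hDY : IsOpen DY)
    (F : ℝ → X → Y → Z)
    (hFcont : ContinuousOn (fun p : ℝ × X × Y => F p.1 p.2.1 p.2.2) (T ×ˢ DX ×ˢ DY))
    -- `F` satisfies locally a Lipschitz condition with respect to `(x, y)` on `T × D_X × D_Y`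
    (hFlip : ∀ t' ∈ T, ∀ x' ∈ DX, ∀ y' ∈ DY, ∃ δ > (0:ℝ), ∃ L ≥ (0:ℝ),
        ∀ t ∈ T, |t - t'| < δ →
        ∀ x₁ ∈ DX, ∀ x₂ ∈ DX, ‖x₁ - x'‖ < δ → ‖x₂ - x'‖ < δ →
        ∀ y₁ ∈ DY, ∀ y₂ ∈ DY, ‖y₁ - y'‖ < δ → ‖y₂ - y'‖ < δ →
          ‖F t x₁ y₁ - F t x₂ y₂‖ ≤ L * (‖x₁ - x₂‖ + ‖y₁ - y₂‖))
    (t' : ℝ) (x' : X) (y' : Y)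
    (ht' : t' ∈ T) (hx' : x' ∈ DX) (hy' : y' ∈ DY)
    (hsol : F t' x' y' = 0)
    (W : Y →L[ℝ] Z) (Winv : Z →L[ℝ] Y)
    (hW₁ : ∀ y, Winv (W y) = y) (hW₂ : ∀ z, W (Winv z) = z)
    (δ ε k : ℝ) (hδ : 0 < δ) (hε : 0 < ε) (hk : 0 ≤ k) (hkW : k * ‖Winv‖ < 1)
    (hcontr : ∀ t ∈ T, |t - t'| < δ → ∀ x ∈ DX, ‖x - x'‖ < δ →
        ∀ y₁ ∈ DY, ∀ y₂ ∈ DY, ‖y₁ - y'‖ < ε → ‖y₂ - y'‖ < ε →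
          ‖F t x y₁ - F t x y₂ - W (y₁ - y₂)‖ ≤ k * ‖y₁ - y₂‖) :
    ∃ r > (0:ℝ), ∃ ρ > (0:ℝ), r ≤ δ ∧ ρ ≤ ε ∧
      Metric.ball x' r ⊆ DX ∧ Metric.ball y' ρ ⊆ DY ∧
      ∃ υ : ℝ → X → Y,
        υ t' x' = y' ∧
        -- `υ` solves `F(t, x, υ(t,x)) = 0` and maps into `U_ρ(y')`
        (∀ t ∈ T, |t - t'| < r → ∀ x, ‖x - x'‖ < r →
            ‖υ t x - y'‖ < ρ ∧ F t x (υ t x) = 0) ∧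
        -- continuity of `υ`
        ContinuousOn (fun p : ℝ × X => υ p.1 p.2)
          ((T ∩ Metric.ball t' r) ×ˢ Metric.ball x' r) ∧
        -- `υ` is Lipschitz in `x`
        (∃ L ≥ (0:ℝ), ∀ t ∈ T, |t - t'| < r →
            ∀ x₁, ‖x₁ - x'‖ < r → ∀ x₂, ‖x₂ - x'‖ < r →
              ‖υ t x₁ - υ t x₂‖ ≤ L * ‖x₁ - x₂‖) ∧
        -- uniqueness of the solution in `U_ρ(y')`
        (∀ t ∈ T, |t - t'| < r → ∀ x, ‖x - x'‖ < r →
            ∀ y, ‖y - y'‖ < ρ → F t x y = 0 → y = υ t x) :=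
  stmt_8_general T DX DY hDX hDY F hFcont hFlip t' x' y' ht' hx' hy' hsol W Winv hW₁ hW₂ δ ε k hδ hε
    hk hkW hcontr
end

section
/- (Differential inequality along trajectories, min-version) Let W be a Banach space, D ⊆ W, H ∈ C(ℝ₊×D, W). Let V(w) = min_{i=1,…,m} V_i(w) with V_i ∈ C(W, ℝ₊) continuously differentiable on D, and let U ∈ C(ℝ₊), ψ : ℝ₊ → ℝ₊ locally integrable, such that ⟨H(t,w), grad V_{j(w)}(w)⟩ ≥ U(V(w)) ψ(t) for all w ∈ D, where j(w) is any index achieving the minimum. If w(t) solves ẇ = H(t,w) on [t₁,t₂] with w(t) ∈ D for all t, then V(w(t₂)) − V(w(t₁)) ≥ ∫_{t₁}^{t₂} U(V(w(τ))) ψ(τ) dτ. -/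
open Filter Topology MeasureTheory

/-!
Along the trajectory, `t ↦ V (w t)` is a finite minimum of differentiable functions of `t`,
so it has a right derivative at every `t`: the least of the derivatives `DV i (w t) (H t (w t))`
over the indices `i` active at `t`. Choosing `j(w t)` to be such an index, the hypothesis bounds
this right derivative below by `U (V (w t)) * ψ t`, and the comparison principle for right
derivatives integrates the bound.
-/

section FiniteMin

variable {ι : Type*} [Finite ι]

theorem exists_lex_argmin [Nonempty ι] (f f' : ι → ℝ) :
    ∃ i, (∀ j, f i ≤ f j) ∧ ∀ j, (∀ k, f j ≤ f k) → f' i ≤ f' j := by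
  obtain ⟨i₀, hi₀⟩ := exists_eq_ciInf_of_finite (f := f)
  obtain ⟨i, hi, hmin⟩ := Set.exists_min_image {j | ∀ k, f j ≤ f k} f' (Set.toFinite _)
    ⟨i₀, fun k => hi₀ ▸ ciInf_le (Finite.bddBelow_range f) k⟩
  exact ⟨i, hi, hmin⟩

theorem continuousAt_ciInf_of_finite {X : Type*} [TopologicalSpace X] [Nonempty ι]
    {f : ι → X → ℝ} {x : X} (hf : ∀ i, ContinuousAt (f i) x) :
    ContinuousAt (fun y => ⨅ i, f i y) x := by
  have := Fintype.ofFinite ι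
  simpa only [← Finset.inf'_univ_eq_ciInf] using
    ContinuousAt.finset_inf'_apply Finset.univ_nonempty fun i _ => hf i

theorem hasDerivWithinAt_ciInf_Ioi {f : ι → ℝ → ℝ} {f' : ι → ℝ} {x : ℝ}
    (hf : ∀ i, HasDerivAt (f i) (f' i) x) {i : ι} (hi : ∀ j, f i x ≤ f j x)
    (hi' : ∀ j, (∀ k, f j x ≤ f k x) → f' i ≤ f' j) :
    HasDerivWithinAt (fun s => ⨅ j, f j s) (f' i) (Set.Ioi x) x := by
  have : Nonempty ι := ⟨i⟩
  have hbdd : ∀ s, BddBelow (Set.range fun j => f j s) := fun s => Finite.bddBelow_range _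
  have hgx : (⨅ j, f j x) = f i x := le_antisymm (ciInf_le (hbdd x) i) (le_ciInf hi)
  rw [hasDerivWithinAt_iff_tendsto_slope' Set.self_notMem_Ioi, tendsto_order]
  have hslope : ∀ j, Tendsto (slope (f j) x) (𝓝[>] x) (𝓝 (f' j)) := fun j =>
    (hasDerivAt_iff_tendsto_slope.1 (hf j)).mono_left (nhdsWithin_mono x fun _ h => ne_of_gt h)
  constructor
  · intro a ha
    have hinactive : ∀ᶠ s in 𝓝[>] x, ∀ k, f i x < f k x → f i s < f k s := by
      refine eventually_all.2 fun k => ?_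
      by_cases hk : f i x < f k x
      · exact ((hf i).continuousAt.eventually_lt (hf k).continuousAt hk).filter_mono
          nhdsWithin_le_nhds |>.mono fun s hs _ => hs
      · exact .of_forall fun _ h => absurd h hk
    have hactive : ∀ᶠ s in 𝓝[>] x, ∀ j, (∀ k, f j x ≤ f k x) → a < slope (f j) x s := by
      refine eventually_all.2 fun j => ?_
      by_cases hj : ∀ k, f j x ≤ f k x
      · exact ((hslope j).eventually (lt_mem_nhds (ha.trans_le (hi' j hj)))).mono
          fun _ hs _ => hs
      · exact .of_forall fun _ h => absurd h hj
    -- For `s` close to `x` the minimum is attained at an index active at `x`.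
    filter_upwards [hinactive, hactive] with s hin hact
    obtain ⟨j, hj⟩ := exists_eq_ciInf_of_finite (f := fun j => f j s)
    have hj_active : ∀ k, f j x ≤ f k x := by
      by_contra! ⟨k, hk⟩
      have := hin j ((hi k).trans_lt hk)
      linarith [ciInf_le (hbdd s) i]
    have hjx : f j x = f i x := le_antisymm (hj_active i) (hi j)
    simpa only [slope_def_field, hgx, ← hjx, ← hj] using hact j hj_active
  · intro a ha
    filter_upwards [(hslope i).eventually (gt_mem_nhds ha), self_mem_nhdsWithin]
      with s hs (hxs : x < s)
    refine lt_of_le_of_lt ?_ hs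
    rw [slope_def_field, slope_def_field, hgx]
    gcongr
    exact ciInf_le (hbdd s) i

end FiniteMin

theorem stmt_14_general
    {W : Type*} [NormedAddCommGroup W] [NormedSpace ℝ W]
    (D : Set W) (H : ℝ → W → W)
    (m : ℕ) (hm : 0 < m)
    (V : Fin m → W → ℝ)
    (hVnonneg : ∀ i w, 0 ≤ V i w)
    (DV : Fin m → W → (W →L[ℝ] ℝ))
    (hDV : ∀ i, ∀ w ∈ D, HasFDerivAt (V i) (DV i w) w)
    (U : ℝ → ℝ) (hU : ContinuousOn U (Set.Ici 0))
    (ψ : ℝ → ℝ)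
    (hψint : ∀ a b : ℝ, IntervalIntegrable ψ volume a b)
    (hineq : ∀ t ∈ Set.Ici (0:ℝ), ∀ w ∈ D, ∀ i : Fin m,
        (∀ k, V i w ≤ V k w) → U (⨅ k, V k w) * ψ t ≤ DV i w (H t w))
    (t₁ t₂ : ℝ) (ht₁ : 0 ≤ t₁) (ht₁₂ : t₁ ≤ t₂)
    (w : ℝ → W)
    (hw : ∀ t ∈ Set.Icc t₁ t₂, HasDerivAt w (H t (w t)) t)
    (hwD : ∀ t ∈ Set.Icc t₁ t₂, w t ∈ D) :
    ∫ τ in t₁..t₂, U (⨅ k, V k (w τ)) * ψ τ ≤ (⨅ k, V k (w t₂)) - (⨅ k, V k (w t₁)) := by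
  have : Nonempty (Fin m) := ⟨⟨0, hm⟩⟩
  have hVw : ∀ t ∈ Set.Icc t₁ t₂, ∀ k,
      HasDerivAt (fun s => V k (w s)) (DV k (w t) (H t (w t))) t :=
    fun t ht k => (hDV k _ (hwD t ht)).comp_hasDerivAt t (hw t ht)
  choose ix hix_min hix_deriv using fun t =>
    exists_lex_argmin (fun k => V k (w t)) (fun k => DV k (w t) (H t (w t)))
  have hcont : ContinuousOn (fun s => ⨅ k, V k (w s)) (Set.Icc t₁ t₂) := fun t ht =>
    (continuousAt_ciInf_of_finite fun k => (hVw t ht k).continuousAt).continuousWithinAt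
  have hderiv : ∀ t ∈ Set.Ioo t₁ t₂, HasDerivWithinAt (fun s => ⨅ k, V k (w s))
      (DV (ix t) (w t) (H t (w t))) (Set.Ioi t) t := fun t ht =>
    hasDerivWithinAt_ciInf_Ioi (hVw t (Set.Ioo_subset_Icc_self ht)) (hix_min t) (hix_deriv t)
  have hint : IntegrableOn (fun τ => U (⨅ k, V k (w τ)) * ψ τ) (Set.Icc t₁ t₂) := by
    rw [← intervalIntegrable_iff_integrableOn_Icc_of_le ht₁₂]
    refine (hψint t₁ t₂).continuousOn_mul ?_
    rw [Set.uIcc_of_le ht₁₂]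
    exact hU.comp hcont fun τ _ => le_ciInf fun k => hVnonneg k (w τ)
  exact intervalIntegral.integral_le_sub_of_hasDeriv_right_of_le ht₁₂ hcont hderiv hint
    fun t ht => hineq t (ht₁.trans ht.1.le) (w t) (hwD t (Set.Ioo_subset_Icc_self ht))
      (ix t) (hix_min t)

/-- Differential inequality along trajectories (min-version): if
`V(w) = min_i V_i(w)` with `V_i ∈ C(W, ℝ₊)` continuously differentiable on `D`, and
`⟨H(t,w), grad V_{j(w)}(w)⟩ ≥ U(V(w)) ψ(t)` on `D` for any index `j(w)` achieving the
minimum, then along any solution `w` of `ẇ = H(t,w)` on `[t₁,t₂]` staying in `D`: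
`V(w(t₂)) - V(w(t₁)) ≥ ∫_{t₁}^{t₂} U(V(w(τ))) ψ(τ) dτ`. -/
theorem stmt_14
    {W : Type*} [NormedAddCommGroup W] [NormedSpace ℝ W] [CompleteSpace W]
    (D : Set W) (H : ℝ → W → W)
    (hHcont : ContinuousOn (fun p : ℝ × W => H p.1 p.2) (Set.Ici 0 ×ˢ D))
    (m : ℕ) (hm : 0 < m)
    (V : Fin m → W → ℝ)
    (hVcont : ∀ i, Continuous (V i)) (hVnonneg : ∀ i w, 0 ≤ V i w)
    (DV : Fin m → W → (W →L[ℝ] ℝ))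
    (hDV : ∀ i, ∀ w ∈ D, HasFDerivAt (V i) (DV i w) w)
    (hDVcont : ∀ i, ContinuousOn (DV i) D)
    (U : ℝ → ℝ) (hU : ContinuousOn U (Set.Ici 0))
    (ψ : ℝ → ℝ) (hψ : ∀ t, 0 ≤ ψ t)
    (hψint : ∀ a b : ℝ, IntervalIntegrable ψ volume a b)
    (hineq : ∀ t ∈ Set.Ici (0:ℝ), ∀ w ∈ D, ∀ i : Fin m,
        (∀ k, V i w ≤ V k w) → U (⨅ k, V k w) * ψ t ≤ DV i w (H t w))
    (t₁ t₂ : ℝ) (ht₁ : 0 ≤ t₁) (ht₁₂ : t₁ ≤ t₂)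
    (w : ℝ → W)
    (hw : ∀ t ∈ Set.Icc t₁ t₂, HasDerivAt w (H t (w t)) t)
    (hwD : ∀ t ∈ Set.Icc t₁ t₂, w t ∈ D) :
    ∫ τ in t₁..t₂, U (⨅ k, V k (w τ)) * ψ τ ≤ (⨅ k, V k (w t₂)) - (⨅ k, V k (w t₁)) :=
  stmt_14_general D H m hm V hVnonneg DV hDV U hU ψ hψint hineq t₁ t₂ ht₁ ht₁₂ w hw hwD
end

section
/- (Global existence, Lipschitz-Lyapunov version) Let W be a Banach space and Π̂ ∈ C(ℝ₊×W, W) locally Lipschitz in w with local existence for all initial data and the blow-up alternative. Suppose there exist R > 0, V ∈ C(W, ℝ₊) satisfying a (global) Lipschitz condition on {‖w‖ ≥ R} with V(w) → ∞ as ‖w‖ → ∞, and U ∈ C(ℝ₊), ψ : ℝ₊ → ℝ₊ locally integrable with ∫^∞ du/U(u) = ∞, such that ‖Π̂(t,w)‖ ≤ U(V(w)) ψ(t) for all t ≥ 0 and ‖w‖ ≥ R. Then every solution of ẇ = Π̂(t,w) is global. -/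
/-!
Uniqueness (from the local Lipschitz bound) lets all solutions from `(t₀, w₀)` be glued into
one on `[t₀, T*)`. If `T* < ∞`, a bound on `‖w‖` there bounds `ẇ`, so `w(t)` converges as
`t → T*` and the solution can be continued past `T*`, a contradiction.

The bound on `‖w‖` is the Lyapunov argument. If `‖w(t)‖` is large, go back to the last time
`a ≤ t` at which `‖w‖ = R` (or to `t₀`); there `V ∘ w` is bounded, since `V` is Lipschitz on the
sphere. On `[a, t]` we have `‖w‖ ≥ R`, so `g = V ∘ w` satisfies
`g s₂ - g s₁ ≤ l ‖w s₂ - w s₁‖ ≤ ∫ U(g) · lψ`, and comparison gives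
`∫_{g a}^{g t} du / U(u) ≤ l ∫ ψ`. As `∫^∞ du / U = ∞`, this bounds `g t`, hence `‖w t‖`.
Zeros and sign changes of `U` are handled by comparing with `max U 0 + δ` and letting `δ → 0`
by monotone convergence.
-/

open Filter Topology MeasureTheory Set intervalIntegral

theorem ContinuousOn.le_left_of_eventually_le {α β : Type*} [ConditionallyCompleteLinearOrder α]
    [TopologicalSpace α] [OrderTopology α] [DenselyOrdered α] [LinearOrder β]
    [TopologicalSpace β] [OrderClosedTopology β] {F : α → β} {a b : α}
    (hF : ContinuousOn F (Icc a b)) (hloc : ∀ τ ∈ Ico a b, ∀ᶠ s in 𝓝[>] τ, F s ≤ F τ) :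
    ∀ t ∈ Icc a b, F t ≤ F a := by
  have hclosed : IsClosed ({t | F t ≤ F a} ∩ Icc a b) := by
    rw [inter_comm]
    exact hF.preimage_isClosed_of_isClosed isClosed_Icc isClosed_Iic
  exact hclosed.Icc_subset_of_forall_mem_nhdsWithin le_rfl fun τ hτ =>
    (hloc τ hτ.2).mono fun s hs => hs.trans hτ.1

theorem eventually_nhdsGT_forall_Icc {p : ℝ → Prop} {τ : ℝ} (h : ∀ᶠ u in 𝓝[≥] τ, p u) :
    ∀ᶠ s in 𝓝[>] τ, ∀ u ∈ Icc τ s, p u := by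
  obtain ⟨u', hu', hsub⟩ := mem_nhdsGE_iff_exists_Ico_subset.mp h
  filter_upwards [Ioo_mem_nhdsGT hu'] with s hs u hu using hsub ⟨hu.1, hu.2.trans_lt hs.2⟩

section Comparison

variable {P g φ : ℝ → ℝ} {a b δ : ℝ}

theorem integral_inv_add_le_integral_of_le_const (hP0 : ∀ u, 0 ≤ P u) (hδ : 0 < δ)
    {τ s c : ℝ} (hτs : τ ≤ s) (hc : 0 < c) (hφ : ∀ t, 0 ≤ φ t)
    (hφi : IntervalIntegrable φ volume τ s)
    (hPi : IntervalIntegrable (fun u => (P u + δ)⁻¹) volume (g τ) (g s))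
    (hPgi : IntervalIntegrable (fun t => P (g t) * φ t) volume τ s)
    (hkey : g s - g τ ≤ ∫ t in τ..s, P (g t) * φ t)
    (hPg : ∀ t ∈ Icc τ s, P (g t) ≤ c) (hP : ∀ u ∈ Icc (g τ) (g s), c ≤ P u + δ) :
    ∫ u in g τ..g s, (P u + δ)⁻¹ ≤ ∫ t in τ..s, φ t := by
  have hφnn : 0 ≤ ∫ t in τ..s, φ t := integral_nonneg hτs fun t _ => hφ t
  rcases le_total (g s) (g τ) with hle | hlt
  · rw [integral_symm]
    have : 0 ≤ ∫ u in g s..g τ, (P u + δ)⁻¹ :=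
      integral_nonneg hle fun u _ => inv_nonneg.mpr (by linarith [hP0 u])
    linarith
  calc ∫ u in g τ..g s, (P u + δ)⁻¹
      ≤ ∫ _ in g τ..g s, c⁻¹ :=
        integral_mono_on hlt hPi intervalIntegrable_const fun u hu => inv_anti₀ hc (hP u hu)
    _ = c⁻¹ * (g s - g τ) := by rw [intervalIntegral.integral_const, smul_eq_mul, mul_comm]
    _ ≤ c⁻¹ * ∫ t in τ..s, c * φ t := by
        gcongr
        exact hkey.trans <| integral_mono_on hτs hPgi (hφi.const_mul c) fun t ht =>
          mul_le_mul_of_nonneg_right (hPg t ht) (hφ t)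
    _ = ∫ t in τ..s, φ t := by
        rw [intervalIntegral.integral_const_mul, inv_mul_cancel_left₀ hc.ne']

theorem eventually_integral_inv_add_le_integral (hP : Continuous P) (hP0 : ∀ u, 0 ≤ P u)
    (hδ : 0 < δ) (hg : ContinuousOn g (Icc a b)) (hφ : ∀ t, 0 ≤ φ t)
    (hφi : IntervalIntegrable φ volume a b)
    (hkey : ∀ s₁ s₂, a ≤ s₁ → s₁ ≤ s₂ → s₂ ≤ b → g s₂ - g s₁ ≤ ∫ t in s₁..s₂, P (g t) * φ t)
    {τ : ℝ} (hτ : τ ∈ Ico a b) :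
    ∀ᶠ s in 𝓝[>] τ, ∫ u in g τ..g s, (P u + δ)⁻¹ ≤ ∫ t in τ..s, φ t := by
  have hτ' : τ ∈ Icc a b := Ico_subset_Icc_self hτ
  -- Near `τ`, `P ∘ g ≤ c ≤ P + δ` with `c = P (g τ) + δ / 2`: the slack `δ` absorbs the
  -- oscillation of `P`.
  obtain ⟨ρ, hρ, hball⟩ := Metric.mem_nhds_iff.mp <| hP.continuousAt.preimage_mem_nhds <|
    Ioo_mem_nhds (show P (g τ) - δ / 2 < P (g τ) by linarith)
      (show P (g τ) < P (g τ) + δ / 2 by linarith)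
  rw [Real.ball_eq_Ioo] at hball
  have hIcc : Icc a b ∈ 𝓝[≥] τ :=
    mem_of_superset (Ico_mem_nhdsGE hτ.2) (Ico_subset_Icc_self.trans (Icc_subset_Icc_left hτ.1))
  have hnear : ∀ᶠ t in 𝓝[≥] τ, t ∈ Icc a b ∧ g t ∈ Ioo (g τ - ρ) (g τ + ρ) :=
    Eventually.and hIcc <| (hg τ hτ').tendsto.mono_left (nhdsWithin_le_of_mem hIcc)
      (Ioo_mem_nhds (by linarith) (by linarith))
  filter_upwards [eventually_nhdsGT_forall_Icc hnear, self_mem_nhdsWithin] with s hs hτs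
  obtain ⟨hsab, hgs⟩ := hs s ⟨hτs.le, le_rfl⟩
  have hφi' : IntervalIntegrable φ volume τ s :=
    hφi.mono_set (uIcc_subset_uIcc (Icc_subset_uIcc hτ') (Icc_subset_uIcc hsab))
  refine integral_inv_add_le_integral_of_le_const hP0 hδ hτs.le (by linarith [hP0 (g τ)]) hφ hφi'
    (((hP.add continuous_const).inv₀ fun u =>
      (by linarith [hP0 u] : 0 < P u + δ).ne').intervalIntegrable _ _)
    (hφi'.continuousOn_mul ((hP.comp_continuousOn hg).mono
      (by rw [uIcc_of_le hτs.le]; exact Icc_subset_Icc hτ.1 hsab.2)))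
    (hkey τ s hτ.1 hτs.le hsab.2) (fun t ht => (hball (hs t ht).2).2.le) fun u hu => ?_
  have := (hball (Icc_subset_Ioo (by linarith) hgs.2 hu)).1
  linarith

theorem integral_inv_add_le_integral (hab : a ≤ b) (hP : Continuous P) (hP0 : ∀ u, 0 ≤ P u)
    (hδ : 0 < δ) (hg : ContinuousOn g (Icc a b)) (hφ : ∀ t, 0 ≤ φ t)
    (hφi : IntervalIntegrable φ volume a b)
    (hkey : ∀ s₁ s₂, a ≤ s₁ → s₁ ≤ s₂ → s₂ ≤ b → g s₂ - g s₁ ≤ ∫ t in s₁..s₂, P (g t) * φ t) :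
    ∫ u in g a..g b, (P u + δ)⁻¹ ≤ ∫ t in a..b, φ t := by
  have hc : Continuous fun u => (P u + δ)⁻¹ :=
    (hP.add continuous_const).inv₀ fun u => (by linarith [hP0 u] : 0 < P u + δ).ne'
  have hφi' {s₁ s₂} (h₁ : s₁ ∈ Icc a b) (h₂ : s₂ ∈ Icc a b) : IntervalIntegrable φ volume s₁ s₂ :=
    hφi.mono_set (uIcc_subset_uIcc (Icc_subset_uIcc h₁) (Icc_subset_uIcc h₂))
  let F t := (∫ u in g a..g t, (P u + δ)⁻¹) - ∫ s in a..t, φ s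
  have hF : ContinuousOn F (Icc a b) := by
    refine ((continuous_primitive (fun _ _ => hc.intervalIntegrable _ _) _).comp_continuousOn
      hg).sub ?_
    simpa [uIcc_of_le hab] using continuousOn_primitive_interval' hφi left_mem_uIcc
  suffices hloc : ∀ τ ∈ Ico a b, ∀ᶠ s in 𝓝[>] τ, F s ≤ F τ by
    simpa [F] using hF.le_left_of_eventually_le hloc b ⟨hab, le_rfl⟩
  intro τ hτ
  have hτ' : τ ∈ Icc a b := Ico_subset_Icc_self hτ
  filter_upwards [eventually_integral_inv_add_le_integral hP hP0 hδ hg hφ hφi hkey hτ,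
    Ioo_mem_nhdsGT hτ.2] with s hstep hs
  have h₁ := integral_add_adjacent_intervals
    (hc.intervalIntegrable (μ := volume) (g a) (g τ)) (hc.intervalIntegrable (g τ) (g s))
  have h₂ := integral_add_adjacent_intervals (hφi' ⟨le_rfl, hab⟩ hτ')
    (hφi' hτ' ⟨hτ.1.trans hs.1.le, hs.2.le⟩)
  simp only [F]
  linarith

end Comparison

theorem ContinuousOn.inv_max_zero_add {U : ℝ → ℝ} {s : Set ℝ} {δ : ℝ} (hU : ContinuousOn U s)
    (hδ : 0 < δ) : ContinuousOn (fun u => (max (U u) 0 + δ)⁻¹) s :=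
  ((hU.sup continuousOn_const).add continuousOn_const).inv₀ fun u _ =>
    (add_pos_of_nonneg_of_pos (le_max_right (U u) 0) hδ).ne'

theorem integral_inv_le_of_forall_integral_inv_add_le {U : ℝ → ℝ} {a b Φ : ℝ} (hab : a ≤ b)
    (hU : ContinuousOn U (Icc a b))
    (h : ∀ δ > 0, ∫ u in a..b, (max (U u) 0 + δ)⁻¹ ≤ Φ) :
    ∫ u in a..b, (U u)⁻¹ ≤ Φ := by
  have hΦ : 0 ≤ Φ := (integral_nonneg hab fun u _ => by positivity).trans (h 1 one_pos)
  by_cases hint : IntervalIntegrable (fun u => (U u)⁻¹) volume a b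
  swap
  · rwa [integral_undef hint]
  let δ (n : ℕ) : ℝ := 1 / ((n : ℝ) + 1)
  have hδ (n : ℕ) : 0 < δ n := by positivity
  let f (n : ℕ) (u : ℝ) := ENNReal.ofReal (max (U u) 0 + δ n)⁻¹
  have hf_mono (u : ℝ) : Monotone fun n => f n u := fun m n hmn =>
    ENNReal.ofReal_le_ofReal <| inv_anti₀ (by positivity) <| by
      gcongr
      exact Nat.one_div_le_one_div hmn
  have hf_lim (u : ℝ) : ENNReal.ofReal (U u)⁻¹ ≤ ⨆ n, f n u := by
    rcases le_or_gt (U u) 0 with hle | hpos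
    · simp [ENNReal.ofReal_of_nonpos (inv_nonpos.mpr hle)]
    have hδ_lim : Tendsto (fun n => (max (U u) 0 + δ n)⁻¹) atTop (𝓝 (U u)⁻¹) := by
      simpa [δ, max_eq_left hpos.le] using
        ((tendsto_one_div_add_atTop_nhds_zero_nat (𝕜 := ℝ)).const_add (U u)).inv₀
          (by simpa using hpos.ne')
    exact le_of_tendsto (ENNReal.tendsto_ofReal hδ_lim) (Eventually.of_forall (le_iSup (f · u)))
  have hlint : ∫⁻ u in Ioc a b, ENNReal.ofReal (U u)⁻¹ ≤ ENNReal.ofReal Φ :=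
    calc ∫⁻ u in Ioc a b, ENNReal.ofReal (U u)⁻¹
        ≤ ∫⁻ u in Ioc a b, ⨆ n, f n u := setLIntegral_mono' measurableSet_Ioc fun u _ => hf_lim u
      _ = ⨆ n, ∫⁻ u in Ioc a b, f n u :=
        lintegral_iSup' (fun n => (((hU.inv_max_zero_add (hδ n)).mono Ioc_subset_Icc_self)
          |>.aemeasurable measurableSet_Ioc).ennreal_ofReal) (ae_of_all _ hf_mono)
      _ ≤ ENNReal.ofReal Φ := iSup_le fun n => by
        rw [← ofReal_integral_eq_lintegral_ofReal
          ((hU.inv_max_zero_add (hδ n)).integrableOn_Icc.mono_set Ioc_subset_Icc_self)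
          (ae_of_all _ fun u => by positivity)]
        refine ENNReal.ofReal_le_ofReal ?_
        simpa [integral_of_le hab] using h (δ n) (hδ n)
  rw [integral_of_le hab, integral_eq_lintegral_pos_part_sub_lintegral_neg_part hint.1]
  linarith [ENNReal.toReal_le_of_le_ofReal hΦ hlint,
    ENNReal.toReal_nonneg (a := ∫⁻ u in Ioc a b, ENNReal.ofReal (-(U u)⁻¹))]

theorem exists_forall_norm_eq_le {F : Type*} [SeminormedAddCommGroup F] {V : F → ℝ} {R l : ℝ}
    (hl : 0 ≤ l)
    (hV : ∀ x y : F, R ≤ ‖x‖ → R ≤ ‖y‖ → |V x - V y| ≤ l * ‖x - y‖) :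
    ∃ β, ∀ x : F, ‖x‖ = R → V x ≤ β := by
  by_cases h : ∃ x₀ : F, ‖x₀‖ = R
  · obtain ⟨x₀, hx₀⟩ := h
    refine ⟨V x₀ + l * (2 * R), fun x hx => ?_⟩
    have h₁ := (le_abs_self _).trans (hV x x₀ hx.ge hx₀.ge)
    have h₂ : l * ‖x - x₀‖ ≤ l * (2 * R) := by
      gcongr
      linarith [norm_sub_le x x₀]
    linarith
  · exact ⟨0, fun x hx => absurd ⟨x, hx⟩ h⟩

theorem exists_mem_Icc_forall_le_of_le {f : ℝ → ℝ} {a b R : ℝ} (hab : a ≤ b)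
    (hf : ContinuousOn f (Icc a b)) (hb : R ≤ f b) :
    ∃ c ∈ Icc a b, (c = a ∨ f c = R) ∧ ∀ s ∈ Icc c b, R ≤ f s := by
  by_cases h : ∃ s ∈ Icc a b, f s < R
  swap
  · simp only [not_exists, not_and, not_lt] at h
    exact ⟨a, left_mem_Icc.mpr hab, Or.inl rfl, fun s hs => h s ⟨hs.1, hs.2⟩⟩
  obtain ⟨s₀, hs₀, hfs₀⟩ := h
  have hS : IsCompact (Icc a b ∩ f ⁻¹' Iic R) := isCompact_Icc.of_isClosed_subset
    (hf.preimage_isClosed_of_isClosed isClosed_Icc isClosed_Iic) inter_subset_left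
  obtain ⟨c, ⟨hc, hfc⟩, hcmax⟩ := hS.exists_isGreatest ⟨s₀, hs₀, hfs₀.le⟩
  have hgt : ∀ s ∈ Ioc c b, R < f s := fun s hs => not_le.mp fun hle =>
    (hcmax ⟨⟨hc.1.trans hs.1.le, hs.2⟩, hle⟩).not_gt hs.1
  have hfc : f c = R := by
    obtain ⟨d, hd, hfd⟩ := intermediate_value_Icc hc.2 (hf.mono (Icc_subset_Icc_left hc.1))
      ⟨hfc, hb⟩
    rcases hd.1.eq_or_lt with rfl | hcd
    · exact hfd
    · exact absurd hfd (hgt d ⟨hcd, hd.2⟩).ne'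
  refine ⟨c, hc, Or.inr hfc, fun s hs => ?_⟩
  rcases hs.1.eq_or_lt with rfl | hcs
  · exact hfc.ge
  · exact (hgt s ⟨hcs, hs.2⟩).le

theorem exists_tendsto_nhdsLT_of_norm_deriv_le {E : Type*} [NormedAddCommGroup E]
    [NormedSpace ℝ E] [CompleteSpace E] {f f' : ℝ → E} {a b C : ℝ} (hab : a < b)
    (hf : ∀ x ∈ Ico a b, HasDerivWithinAt f (f' x) (Ico a b) x)
    (hC : ∀ x ∈ Ico a b, ‖f' x‖ ≤ C) :
    ∃ L, Tendsto f (𝓝[<] b) (𝓝 L) := by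
  have hlip : LipschitzOnWith C.toNNReal f (Ico a b) :=
    (convex_Ico a b).lipschitzOnWith_of_nnnorm_hasDerivWithin_le hf fun x hx => by
      rw [← NNReal.coe_le_coe, coe_nnnorm]
      exact (hC x hx).trans (Real.le_coe_toNNReal C)
  have hs : Ico a b ∈ 𝓝[<] b := Ico_mem_nhdsLT hab
  refine cauchy_map_iff_exists_tendsto.mp (cauchy_map_iff'.mpr ?_)
  refine hlip.uniformContinuousOn.mono_left
    (le_inf ?_ (le_principal_iff.mpr (prod_mem_prod hs hs)))
  exact (Filter.prod_mono nhdsWithin_le_nhds nhdsWithin_le_nhds).trans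
    (by rw [← nhds_prod_eq]; exact nhds_le_uniformity b)

section ODE

variable {E : Type*} [NormedAddCommGroup E] [NormedSpace ℝ E]

def IsODESolutionOn (v : ℝ → E → E) (w : ℝ → E) (s : Set ℝ) : Prop :=
  ∀ t ∈ s, HasDerivAt w (v t (w t)) t

def IsLocallyLipschitzInState (v : ℝ → E → E) : Prop :=
  ∀ (t : ℝ) (x : E), ∃ ε > (0 : ℝ), ∃ K : NNReal,
    ∀ s ∈ Metric.ball t ε, LipschitzOnWith K (v s) (Metric.ball x ε)

namespace IsODESolutionOn

variable {v : ℝ → E → E} {w w₁ w₂ : ℝ → E} {s s' : Set ℝ} {V : E → ℝ} {U ψ : ℝ → ℝ}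
  {R l a b t₀ T C : ℝ}

theorem mono (hw : IsODESolutionOn v w s) (hs : s' ⊆ s) : IsODESolutionOn v w s' :=
  fun t ht => hw t (hs ht)

theorem continuousOn (hw : IsODESolutionOn v w s) : ContinuousOn w s :=
  fun t ht => (hw t ht).continuousAt.continuousWithinAt

theorem continuousOn_comp (hv : ContinuousOn (fun p : ℝ × E => v p.1 p.2) (Ici 0 ×ˢ univ))
    (hw : IsODESolutionOn v w s) (hs : s ⊆ Ici 0) : ContinuousOn (fun t => v t (w t)) s :=
  hv.comp (continuousOn_id.prodMk hw.continuousOn) fun _ ht => ⟨hs ht, trivial⟩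

theorem sub_eq_integral [CompleteSpace E] (hw : IsODESolutionOn v w (Icc a b)) (hab : a ≤ b)
    (hc : ContinuousOn (fun t => v t (w t)) (Icc a b)) :
    w b - w a = ∫ t in a..b, v t (w t) := by
  rw [← uIcc_of_le hab] at hw hc
  exact (integral_eq_sub_of_hasDerivAt hw (hc.intervalIntegrable)).symm

theorem eventually_eq_nhdsGE (hv : IsLocallyLipschitzInState v)
    (h₁ : IsODESolutionOn v w₁ (Ico a T)) (h₂ : IsODESolutionOn v w₂ (Ico a T)) (haT : a < T)
    (ha : w₁ a = w₂ a) : ∀ᶠ t in 𝓝[≥] a, w₁ t = w₂ t := by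
  obtain ⟨ε, hε, K, hK⟩ := hv a (w₁ a)
  have hnear : ∀ᶠ t in 𝓝 a, t ∈ Metric.ball a ε ∧ t < T ∧
      w₁ t ∈ Metric.ball (w₁ a) ε ∧ w₂ t ∈ Metric.ball (w₁ a) ε :=
    Eventually.and (Metric.ball_mem_nhds a hε) <| Eventually.and (Iio_mem_nhds haT) <|
      ((h₁ a ⟨le_rfl, haT⟩).continuousAt.eventually (Metric.ball_mem_nhds _ hε)).and
      ((h₂ a ⟨le_rfl, haT⟩).continuousAt.eventually (ha ▸ Metric.ball_mem_nhds _ hε))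
  obtain ⟨η, hη, hball⟩ := Metric.eventually_nhds_iff_ball.mp hnear
  have hsub : Icc a (a + η / 2) ⊆ Metric.ball a η := by
    intro t ht
    rw [Real.ball_eq_Ioo]
    exact ⟨by linarith [ht.1], by linarith [ht.2]⟩
  have hsol {w} (hw : IsODESolutionOn v w (Ico a T)) : IsODESolutionOn v w (Icc a (a + η / 2)) :=
    hw.mono fun t ht => ⟨ht.1, (hball t (hsub ht)).2.1⟩
  have heq : EqOn w₁ w₂ (Icc a (a + η / 2)) :=
    ODE_solution_unique_of_mem_Icc_right (s := fun _ => Metric.ball (w₁ a) ε)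
      (fun t ht => hK t (hball t (hsub (Ico_subset_Icc_self ht))).1) (hsol h₁).continuousOn
      (fun t ht => (hsol h₁ t (Ico_subset_Icc_self ht)).hasDerivWithinAt)
      (fun t ht => (hball t (hsub (Ico_subset_Icc_self ht))).2.2.1) (hsol h₂).continuousOn
      (fun t ht => (hsol h₂ t (Ico_subset_Icc_self ht)).hasDerivWithinAt)
      (fun t ht => (hball t (hsub (Ico_subset_Icc_self ht))).2.2.2) ha
  exact mem_of_superset (Icc_mem_nhdsGE (by linarith)) heq

theorem eqOn (hv : IsLocallyLipschitzInState v) (h₁ : IsODESolutionOn v w₁ (Ico a T))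
    (h₂ : IsODESolutionOn v w₂ (Ico a T)) (ha : w₁ a = w₂ a) : EqOn w₁ w₂ (Ico a T) := by
  intro b hb
  have hclosed : IsClosed ({t | w₁ t = w₂ t} ∩ Icc a b) := by
    rw [inter_comm]
    have hsub : Icc a b ⊆ Ico a T := Icc_subset_Ico_right hb.2
    exact ((h₁.mono hsub).continuousOn.prodMk (h₂.mono hsub).continuousOn)
      |>.preimage_isClosed_of_isClosed isClosed_Icc isClosed_diagonal
  refine hclosed.Icc_subset_of_forall_mem_nhdsWithin ha (fun x hx => ?_) ⟨hb.1, le_rfl⟩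
  have hsub : Ico x T ⊆ Ico a T := Ico_subset_Ico_left hx.2.1
  exact nhdsWithin_mono _ Ioi_subset_Ici_self <|
    eventually_eq_nhdsGE hv (h₁.mono hsub) (h₂.mono hsub) (hx.2.2.trans hb.2) hx.1

theorem append (hcont : ContinuousOn (fun p : ℝ × E => v p.1 p.2) (Ici 0 ×ˢ univ))
    (ht₀ : 0 ≤ t₀) (hT : t₀ < T) (hw : IsODESolutionOn v w (Ico t₀ T)) {z : ℝ → E} {T' : ℝ}
    (hz : IsODESolutionOn v z (Ico T T')) (hlim : Tendsto w (𝓝[<] T) (𝓝 (z T))) :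
    IsODESolutionOn v (fun t => if t < T then w t else z t) (Ico t₀ T') := by
  let w' t := if t < T then w t else z t
  have hw'w {t} (ht : t < T) : w' =ᶠ[𝓝 t] w := by
    filter_upwards [Iio_mem_nhds ht] with s hs
    simp [w', mem_Iio.mp hs]
  have hderiv_lt {t} (ht : t ∈ Ioo t₀ T) : HasDerivAt w' (v t (w t)) t :=
    (hw t ⟨ht.1.le, ht.2⟩).congr_of_eventuallyEq (hw'w ht.2)
  intro t ht
  rcases lt_trichotomy t T with h | rfl | h
  · simpa [w', h] using (hw t ⟨ht.1, h⟩).congr_of_eventuallyEq (hw'w h)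
  · have hw't : w' t = z t := by simp [w']
    have hright : HasDerivWithinAt w' (v t (z t)) (Ici t) t :=
      (hz t ⟨le_rfl, ht.2⟩).hasDerivWithinAt.congr
        (fun s hs => by simp [w', not_lt.mpr (mem_Ici.mp hs)]) hw't
    have hmem : Ioo t₀ t ∈ 𝓝[<] t := Ioo_mem_nhdsLT hT
    have hleft : HasDerivWithinAt w' (v t (z t)) (Iic t) t := by
      refine hasDerivWithinAt_Iic_of_tendsto_deriv
        (fun s hs => (hderiv_lt hs).differentiableAt.differentiableWithinAt) ?_ hmem ?_
      · rw [ContinuousWithinAt, hw't]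
        exact (hlim.mono_left (nhdsWithin_mono _ Ioo_subset_Iio_self)).congr'
          (eventually_nhdsWithin_of_forall fun s hs => (hw'w hs.2).self_of_nhds.symm)
      · have hpath : Tendsto (fun s => (s, w s)) (𝓝[<] t) (𝓝[Ici 0 ×ˢ univ] (t, z t)) :=
          tendsto_nhdsWithin_of_tendsto_nhds_of_eventually_within _
            ((tendsto_nhdsWithin_of_tendsto_nhds tendsto_id).prodMk_nhds hlim)
            (mem_of_superset hmem fun s hs => ⟨ht₀.trans hs.1.le, trivial⟩)
        exact ((hcont (t, z t) ⟨ht₀.trans hT.le, trivial⟩).tendsto.comp hpath).congr'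
          (mem_of_superset hmem fun s hs => (hderiv_lt hs).deriv.symm)
    have := hleft.union hright
    rwa [Iic_union_Ici, hasDerivWithinAt_univ, ← hw't] at this
  · have hw'z : w' =ᶠ[𝓝 t] z := by
      filter_upwards [Ioi_mem_nhds h] with s hs
      simp [w', not_lt.mpr (le_of_lt (mem_Ioi.mp hs))]
    simpa [w', not_lt.mpr h.le] using (hz t ⟨h.le, ht.2⟩).congr_of_eventuallyEq hw'z

theorem exists_extension [CompleteSpace E]
    (hcont : ContinuousOn (fun p : ℝ × E => v p.1 p.2) (Ici 0 ×ˢ univ))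
    (hexist : ∀ x : E, ∃ T' > T, ∃ z : ℝ → E, z T = x ∧ IsODESolutionOn v z (Ico T T'))
    (ht₀ : 0 ≤ t₀) (hT : t₀ < T) (hw : IsODESolutionOn v w (Ico t₀ T))
    (hC : ∀ t ∈ Ico t₀ T, ‖v t (w t)‖ ≤ C) :
    ∃ T' > T, ∃ w' : ℝ → E, w' t₀ = w t₀ ∧ IsODESolutionOn v w' (Ico t₀ T') := by
  obtain ⟨L, hL⟩ := exists_tendsto_nhdsLT_of_norm_deriv_le hT
    (fun t ht => (hw t ht).hasDerivWithinAt) hC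
  obtain ⟨T', hT', z, hzT, hz⟩ := hexist L
  exact ⟨T', hT', _, by simp [hT], hw.append hcont ht₀ hT hz (hzT ▸ hL)⟩

theorem sub_le_mul_integral [CompleteSpace E] (hw : IsODESolutionOn v w (Icc a b))
    (hab : a ≤ b) (hc : ContinuousOn (fun t => v t (w t)) (Icc a b))
    (hV : ∀ x y : E, R ≤ ‖x‖ → R ≤ ‖y‖ → |V x - V y| ≤ l * ‖x - y‖) (hl : 0 ≤ l)
    (hR : ∀ t ∈ Icc a b, R ≤ ‖w t‖)
    (hineq : ∀ t ∈ Icc a b, ‖v t (w t)‖ ≤ U (V (w t)) * ψ t)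
    (hi : IntervalIntegrable (fun t => U (V (w t)) * ψ t) volume a b) :
    V (w b) - V (w a) ≤ l * ∫ t in a..b, U (V (w t)) * ψ t :=
  calc V (w b) - V (w a) ≤ l * ‖w b - w a‖ :=
        (le_abs_self _).trans (hV _ _ (hR b ⟨hab, le_rfl⟩) (hR a ⟨le_rfl, hab⟩))
    _ ≤ l * ∫ t in a..b, U (V (w t)) * ψ t := by
        rw [hw.sub_eq_integral hab hc]
        gcongr
        exact norm_integral_le_of_norm_le hab
          (ae_of_all _ fun t ht => hineq t (Ioc_subset_Icc_self ht)) hi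

theorem integral_inv_le_mul_integral [CompleteSpace E]
    (hcont : ContinuousOn (fun p : ℝ × E => v p.1 p.2) (Ici 0 ×ˢ univ))
    (hw : IsODESolutionOn v w (Icc a b)) (ha : 0 ≤ a) (hab : a ≤ b)
    (hVc : Continuous V) (hV0 : ∀ x, 0 ≤ V x)
    (hV : ∀ x y : E, R ≤ ‖x‖ → R ≤ ‖y‖ → |V x - V y| ≤ l * ‖x - y‖) (hl : 0 ≤ l)
    (hU : ContinuousOn U (Ici 0)) (hψ : ∀ t, 0 ≤ ψ t) (hψi : IntervalIntegrable ψ volume a b)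
    (hR : ∀ t ∈ Icc a b, R ≤ ‖w t‖)
    (hineq : ∀ t ∈ Icc a b, ‖v t (w t)‖ ≤ U (V (w t)) * ψ t) {δ : ℝ} (hδ : 0 < δ) :
    ∫ u in V (w a)..V (w b), (max (U u) 0 + δ)⁻¹ ≤ l * ∫ t in a..b, ψ t := by
  -- `max U 0`, extended continuously to all of `ℝ`
  let P u := max (U (max u 0)) 0
  have hP : Continuous P :=
    (hU.comp_continuous (continuous_id.max continuous_const) fun u => le_max_right u 0).max
      continuous_const
  have hPU {u : ℝ} (hu : 0 ≤ u) : P u = max (U u) 0 := by simp [P, max_eq_left hu]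
  have hg : ContinuousOn (fun t => V (w t)) (Icc a b) := hVc.comp_continuousOn hw.continuousOn
  have hkey (s₁ s₂ : ℝ) (h₁ : a ≤ s₁) (h₁₂ : s₁ ≤ s₂) (h₂ : s₂ ≤ b) :
      V (w s₂) - V (w s₁) ≤ ∫ t in s₁..s₂, P (V (w t)) * (l * ψ t) := by
    have hsub : Icc s₁ s₂ ⊆ Icc a b := Icc_subset_Icc h₁ h₂
    have hψi' : IntervalIntegrable ψ volume s₁ s₂ :=
      hψi.mono_set (by rw [uIcc_of_le hab, uIcc_of_le h₁₂]; exact hsub)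
    have hg' : ContinuousOn (fun t => V (w t)) (uIcc s₁ s₂) := hg.mono (by rwa [uIcc_of_le h₁₂])
    refine ((hw.mono hsub).sub_le_mul_integral h₁₂
      ((hw.continuousOn_comp hcont fun t ht => ha.trans ht.1).mono hsub) hV hl
      (fun t ht => hR t (hsub ht)) (fun t ht => hineq t (hsub ht))
      (hψi'.continuousOn_mul (hU.comp hg' fun t _ => hV0 _))).trans ?_
    rw [← intervalIntegral.integral_const_mul]
    refine integral_mono_on h₁₂ ((hψi'.continuousOn_mul (hU.comp hg' fun t _ => hV0 _)).const_mul l)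
      ((hψi'.const_mul l).continuousOn_mul (hP.comp_continuousOn hg')) fun t _ => ?_
    rw [hPU (hV0 _), mul_left_comm]
    exact mul_le_mul_of_nonneg_right (le_max_left _ _) (mul_nonneg hl (hψ t))
  have hcomp := integral_inv_add_le_integral hab hP (fun u => le_max_right _ 0) hδ hg
    (fun t => mul_nonneg hl (hψ t)) (hψi.const_mul l) hkey
  rw [intervalIntegral.integral_const_mul] at hcomp
  refine le_of_eq_of_le (integral_congr fun u hu => ?_) hcomp
  simp only [hPU ((le_min (hV0 _) (hV0 _)).trans hu.1)]

theorem exists_norm_le_of_lyapunov [CompleteSpace E]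
    (hcont : ContinuousOn (fun p : ℝ × E => v p.1 p.2) (Ici 0 ×ˢ univ))
    (hVc : Continuous V) (hV0 : ∀ x, 0 ≤ V x)
    (hVlip : ∃ l ≥ (0 : ℝ), ∀ x y : E, R ≤ ‖x‖ → R ≤ ‖y‖ → |V x - V y| ≤ l * ‖x - y‖)
    (hVinf : ∀ c : ℝ, ∃ ρ : ℝ, ∀ x : E, ρ ≤ ‖x‖ → c ≤ V x)
    (hU : ContinuousOn U (Ici 0)) (hψ : ∀ t, 0 ≤ ψ t)
    (hψi : ∀ a b : ℝ, IntervalIntegrable ψ volume a b)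
    (hUdiv : ∀ u₀ > (0 : ℝ), Tendsto (fun b => ∫ u in u₀..b, (U u)⁻¹) atTop atTop)
    (hineq : ∀ t ∈ Ici (0 : ℝ), ∀ x : E, R ≤ ‖x‖ → ‖v t x‖ ≤ U (V x) * ψ t)
    (ht₀ : 0 ≤ t₀) (hw : IsODESolutionOn v w (Ico t₀ T)) :
    ∃ M, ∀ t ∈ Ico t₀ T, ‖w t‖ ≤ M := by
  obtain ⟨l, hl, hV⟩ := hVlip
  obtain ⟨β, hβ⟩ := exists_forall_norm_eq_le hl hV
  set Φ := l * ∫ t in t₀..T, ψ t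
  set v₀ := max (max β (V (w t₀))) 0 + 1
  obtain ⟨B, hΦB, hv₀B⟩ :=
    (((hUdiv v₀ (by positivity)).eventually_gt_atTop Φ).and (eventually_ge_atTop v₀)).exists
  obtain ⟨ρ, hρ⟩ := hVinf B
  refine ⟨max ρ R, fun t ht => le_of_not_gt fun hbig => ?_⟩
  have hsub : Icc t₀ t ⊆ Ico t₀ T := Icc_subset_Ico_right ht.2
  obtain ⟨a, ha, ha', hR⟩ := exists_mem_Icc_forall_le_of_le ht.1 (hw.mono hsub).continuousOn.norm
    ((le_max_right ρ R).trans hbig.le)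
  have hwa : V (w a) ≤ v₀ := by
    rcases ha' with rfl | ha'
    · linarith [le_max_right β (V (w a)), le_max_left (max β (V (w a))) 0]
    · linarith [hβ _ ha', le_max_left β (V (w t₀)), le_max_left (max β (V (w t₀))) 0]
  have hwt : B ≤ V (w t) := hρ _ ((le_max_left ρ R).trans hbig.le)
  have hseg (δ : ℝ) (hδ : 0 < δ) : ∫ u in v₀..B, (max (U u) 0 + δ)⁻¹ ≤ Φ :=
    calc ∫ u in v₀..B, (max (U u) 0 + δ)⁻¹
        ≤ ∫ u in V (w a)..V (w t), (max (U u) 0 + δ)⁻¹ :=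
          integral_mono_interval hwa hv₀B hwt (ae_of_all _ fun u => by positivity)
            (((hU.inv_max_zero_add hδ).mono fun u (hu : u ∈ uIcc _ _) =>
              (le_min (hV0 _) (hV0 _)).trans hu.1).intervalIntegrable)
      _ ≤ l * ∫ s in a..t, ψ s :=
          (hw.mono ((Icc_subset_Icc_left ha.1).trans hsub)).integral_inv_le_mul_integral hcont
            (ht₀.trans ha.1) ha.2 hVc hV0 hV hl hU hψ (hψi a t) hR
            (fun s hs => hineq s (ht₀.trans (ha.1.trans hs.1)) _ (hR s hs)) hδ
      _ ≤ Φ := mul_le_mul_of_nonneg_left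
          (integral_mono_interval ha.1 ha.2 ht.2.le (ae_of_all _ hψ) (hψi t₀ T)) hl
  have := integral_inv_le_of_forall_integral_inv_add_le hv₀B
    (hU.mono fun u hu => (by positivity : (0 : ℝ) ≤ v₀).trans hu.1) hseg
  linarith

end IsODESolutionOn

variable {v : ℝ → E → E} {t₀ : ℝ}

theorem exists_isODESolutionOn_of_forall_Ico (hv : IsLocallyLipschitzInState v) {z₁ : ℝ → E}
    {T₁ : ℝ} (hT₁ : t₀ < T₁) (h₁ : IsODESolutionOn v z₁ (Ico t₀ T₁)) :
    ∃ w : ℝ → E, w t₀ = z₁ t₀ ∧ ∀ (T : ℝ) (z : ℝ → E), z t₀ = z₁ t₀ →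
      IsODESolutionOn v z (Ico t₀ T) → IsODESolutionOn v w (Ico t₀ T) := by
  classical
  let extends_past (t : ℝ) (z : ℝ → E) : Prop :=
    ∃ T, t < T ∧ z t₀ = z₁ t₀ ∧ IsODESolutionOn v z (Ico t₀ T)
  let w t := if t < T₁ then z₁ t else Classical.epsilon (extends_past t) t
  have hagree (T : ℝ) (z : ℝ → E) (hz0 : z t₀ = z₁ t₀) (hz : IsODESolutionOn v z (Ico t₀ T)) :
      EqOn w z (Ico t₀ T) := by
    intro t ht
    have huniq {T' : ℝ} {z' : ℝ → E} (hz'0 : z' t₀ = z₁ t₀) (hz' : IsODESolutionOn v z' (Ico t₀ T'))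
        (htT' : t < T') : z' t = z t :=
      (hz'.mono (Ico_subset_Ico_right (min_le_left _ _))).eqOn hv
        (hz.mono (Ico_subset_Ico_right (min_le_right _ _))) (hz'0.trans hz0.symm)
        ⟨ht.1, lt_min htT' ht.2⟩
    by_cases htT₁ : t < T₁
    · simpa [w, htT₁] using huniq rfl h₁ htT₁
    · obtain ⟨T', htT', hz'0, hz'⟩ :=
        Classical.epsilon_spec (p := extends_past t) ⟨z, T, ht.2, hz0, hz⟩
      simpa [w, htT₁] using huniq hz'0 hz' htT'
  refine ⟨w, by simp [w, hT₁], fun T z hz0 hz t ht => ?_⟩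
  rcases lt_or_ge t T₁ with htT₁ | htT₁
  · have hwz₁ : w =ᶠ[𝓝 t] z₁ := by
      filter_upwards [Iio_mem_nhds htT₁] with s hs
      simp [w, mem_Iio.mp hs]
    simpa [w, htT₁] using (h₁ t ⟨ht.1, htT₁⟩).congr_of_eventuallyEq hwz₁
  · have hwz : w =ᶠ[𝓝 t] z := by
      filter_upwards [Ioo_mem_nhds (hT₁.trans_le htT₁) ht.2] with s hs
      exact hagree T z hz0 hz ⟨hs.1.le, hs.2⟩
    rw [hagree T z hz0 hz ht]
    exact (hz t ht).congr_of_eventuallyEq hwz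

theorem exists_isODESolutionOn_Ici_of_bounded [CompleteSpace E]
    (hcont : ContinuousOn (fun p : ℝ × E => v p.1 p.2) (Ici 0 ×ˢ univ))
    (hv : IsLocallyLipschitzInState v)
    (hexist : ∀ t₀ ≥ (0 : ℝ), ∀ w₀ : E, ∃ T > t₀, ∃ w : ℝ → E, w t₀ = w₀ ∧
      IsODESolutionOn v w (Ico t₀ T))
    (hbound : ∀ b₁ b₂ : ℝ, ∃ C : ℝ, ∀ t ∈ Icc 0 b₁, ∀ x : E, ‖x‖ ≤ b₂ → ‖v t x‖ ≤ C)
    (ht₀ : 0 ≤ t₀) (w₀ : E)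
    (hbdd : ∀ (T : ℝ) (w : ℝ → E), w t₀ = w₀ → IsODESolutionOn v w (Ico t₀ T) →
      ∃ M, ∀ t ∈ Ico t₀ T, ‖w t‖ ≤ M) :
    ∃ w : ℝ → E, w t₀ = w₀ ∧ IsODESolutionOn v w (Ici t₀) := by
  obtain ⟨T₁, hT₁, z₁, hz₁0, hz₁⟩ := hexist t₀ ht₀ w₀
  obtain ⟨w, hw0, hw⟩ := exists_isODESolutionOn_of_forall_Ico hv hT₁ hz₁
  rw [hz₁0] at hw0 hw
  let A := {T | ∃ z : ℝ → E, z t₀ = w₀ ∧ IsODESolutionOn v z (Ico t₀ T)}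
  have hsol {t : ℝ} (hA : ∃ T ∈ A, t < T) (ht : t₀ ≤ t) : HasDerivAt w (v t (w t)) t := by
    obtain ⟨T, ⟨z, hz0, hz⟩, htT⟩ := hA
    exact hw T z hz0 hz t ⟨ht, htT⟩
  by_cases hA : BddAbove A
  swap
  · exact ⟨w, hw0, fun t ht => hsol (not_bddAbove_iff.mp hA t) ht⟩
  have hT₁A : T₁ ∈ A := ⟨z₁, hz₁0, hz₁⟩
  have hT : t₀ < sSup A := hT₁.trans_le (le_csSup hA hT₁A)
  have hwT : IsODESolutionOn v w (Ico t₀ (sSup A)) := fun t ht =>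
    hsol ((lt_csSup_iff hA ⟨T₁, hT₁A⟩).mp ht.2) ht.1
  obtain ⟨M, hM⟩ := hbdd _ w hw0 hwT
  obtain ⟨C, hC⟩ := hbound (sSup A) M
  obtain ⟨T', hT', w', hw'0, hw'⟩ := hwT.exists_extension hcont (hexist _ (ht₀.trans hT.le))
    ht₀ hT fun t ht => hC t ⟨ht₀.trans ht.1, ht.2.le⟩ _ (hM t ht)
  exact absurd (le_csSup hA ⟨w', hw'0.trans hw0, hw'⟩) (not_le.mpr hT')

end ODE

theorem stmt_17_general
    {W : Type*} [NormedAddCommGroup W] [NormedSpace ℝ W] [CompleteSpace W]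
    (Phat : ℝ → W → W)
    (hcont : ContinuousOn (fun p : ℝ × W => Phat p.1 p.2) (Set.Ici 0 ×ˢ Set.univ))
    (hlip : ∀ (t : ℝ) (w : W), ∃ ε > (0:ℝ), ∃ K : NNReal,
        ∀ s ∈ Metric.ball t ε, LipschitzOnWith K (Phat s) (Metric.ball w ε))
    (hexist : ∀ t₀ ≥ (0:ℝ), ∀ w₀ : W, ∃ T > t₀, ∃ w : ℝ → W, w t₀ = w₀ ∧
        ∀ t ∈ Set.Ico t₀ T, HasDerivAt w (Phat t (w t)) t)
    (hbound : ∀ b₁ b₂ : ℝ, ∃ C : ℝ, ∀ t ∈ Set.Icc 0 b₁, ∀ w : W, ‖w‖ ≤ b₂ → ‖Phat t w‖ ≤ C)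
    (R : ℝ)
    (V : W → ℝ) (hVcont : Continuous V) (hVnonneg : ∀ w, 0 ≤ V w)
    -- `V` satisfies a Lipschitz condition on `{‖w‖ ≥ R}`
    (hVlip : ∃ l ≥ (0:ℝ), ∀ w₁ w₂ : W, R ≤ ‖w₁‖ → R ≤ ‖w₂‖ →
        |V w₁ - V w₂| ≤ l * ‖w₁ - w₂‖)
    -- `V(w) → ∞` as `‖w‖ → ∞`
    (hVinf : ∀ c : ℝ, ∃ ρ : ℝ, ∀ w : W, ρ ≤ ‖w‖ → c ≤ V w)
    (U : ℝ → ℝ) (hU : ContinuousOn U (Set.Ici 0))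
    (ψ : ℝ → ℝ) (hψ : ∀ t, 0 ≤ ψ t)
    (hψint : ∀ a b : ℝ, IntervalIntegrable ψ volume a b)
    -- `∫^∞ du / U(u) = ∞`
    (hUdiv : ∀ u₀ > (0:ℝ),
        Tendsto (fun b => ∫ u in u₀..b, (U u)⁻¹) atTop atTop)
    (hineq : ∀ t ∈ Set.Ici (0:ℝ), ∀ w : W, R ≤ ‖w‖ → ‖Phat t w‖ ≤ U (V w) * ψ t)
    (t₀ : ℝ) (ht₀ : 0 ≤ t₀) (w₀ : W) :
    ∃ w : ℝ → W, w t₀ = w₀ ∧ ∀ t ∈ Set.Ici t₀, HasDerivAt w (Phat t (w t)) t :=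
  exists_isODESolutionOn_Ici_of_bounded hcont hlip hexist hbound ht₀ w₀ fun _ _ _ hw =>
    hw.exists_norm_le_of_lyapunov hcont hVcont hVnonneg hVlip hVinf hU hψ hψint hUdiv hineq ht₀

/-- Global existence, Lipschitz-Lyapunov version: if `Π̂ ∈ C(ℝ₊ × W, W)` is locally
Lipschitz in `w` with local existence for all initial data and bounded on bounded sets, and
there exist `R > 0`, `V ∈ C(W, ℝ₊)` Lipschitz on `{‖w‖ ≥ R}` with `V(w) → ∞` as
`‖w‖ → ∞`, and `U ∈ C(ℝ₊)`, locally integrable `ψ ≥ 0` with `∫^∞ du/U(u) = ∞`, such that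
`‖Π̂(t,w)‖ ≤ U(V(w)) ψ(t)` for all `t ≥ 0`, `‖w‖ ≥ R`, then every solution is global. -/
theorem stmt_17
    {W : Type*} [NormedAddCommGroup W] [NormedSpace ℝ W] [CompleteSpace W]
    (Phat : ℝ → W → W)
    (hcont : ContinuousOn (fun p : ℝ × W => Phat p.1 p.2) (Set.Ici 0 ×ˢ Set.univ))
    (hlip : ∀ (t : ℝ) (w : W), ∃ ε > (0:ℝ), ∃ K : NNReal,
        ∀ s ∈ Metric.ball t ε, LipschitzOnWith K (Phat s) (Metric.ball w ε))
    (hexist : ∀ t₀ ≥ (0:ℝ), ∀ w₀ : W, ∃ T > t₀, ∃ w : ℝ → W, w t₀ = w₀ ∧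
        ∀ t ∈ Set.Ico t₀ T, HasDerivAt w (Phat t (w t)) t)
    (hbound : ∀ b₁ b₂ : ℝ, ∃ C : ℝ, ∀ t ∈ Set.Icc 0 b₁, ∀ w : W, ‖w‖ ≤ b₂ → ‖Phat t w‖ ≤ C)
    (R : ℝ) (hR : 0 < R)
    (V : W → ℝ) (hVcont : Continuous V) (hVnonneg : ∀ w, 0 ≤ V w)
    -- `V` satisfies a Lipschitz condition on `{‖w‖ ≥ R}`
    (hVlip : ∃ l ≥ (0:ℝ), ∀ w₁ w₂ : W, R ≤ ‖w₁‖ → R ≤ ‖w₂‖ →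
        |V w₁ - V w₂| ≤ l * ‖w₁ - w₂‖)
    -- `V(w) → ∞` as `‖w‖ → ∞`
    (hVinf : ∀ c : ℝ, ∃ ρ : ℝ, ∀ w : W, ρ ≤ ‖w‖ → c ≤ V w)
    (U : ℝ → ℝ) (hU : ContinuousOn U (Set.Ici 0))
    (ψ : ℝ → ℝ) (hψ : ∀ t, 0 ≤ ψ t)
    (hψint : ∀ a b : ℝ, IntervalIntegrable ψ volume a b)
    -- `∫^∞ du / U(u) = ∞`
    (hUdiv : ∀ u₀ > (0:ℝ),
        Tendsto (fun b => ∫ u in u₀..b, (U u)⁻¹) atTop atTop)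
    (hineq : ∀ t ∈ Set.Ici (0:ℝ), ∀ w : W, R ≤ ‖w‖ → ‖Phat t w‖ ≤ U (V w) * ψ t)
    (t₀ : ℝ) (ht₀ : 0 ≤ t₀) (w₀ : W) :
    ∃ w : ℝ → W, w t₀ = w₀ ∧ ∀ t ∈ Set.Ici t₀, HasDerivAt w (Phat t (w t)) t :=
  stmt_17_general Phat hcont hlip hexist hbound R V hVcont hVnonneg hVlip hVinf U hU ψ hψ hψint
    hUdiv hineq t₀ ht₀ w₀
end
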